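/- arXiv:1411.7859 — 9 statements merged into one kernel-verified Lean document; each statement's English description precedes it below -/
import Mathlib

section
/- Let x < y be real numbers, let f : [x,y] → ℝ be continuous and convex, and let F : [x,y] → ℝ be an antiderivative of f. Then f((x+y)/2) ≤ (−3F((3x+y)/4) + (25/11)F((11x+9y)/20) + (8/11)F(y))/(y−x) ≤ (1/(y−x)) ∫ₓʸ f(t) dt. -/
/-!
Both inequalities are Hermite–Hadamard inequalities in disguise. Put `p = (3x+y)/4` and
`q = (11x+9y)/20`. The weights of the three-point rule sum to zero, so the rule equals
`(25/11)(F q - F p) + (8/11)(F y - F p)`. The left Hermite–Hadamard inequality on `[p, q]` and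
`[p, y]` bounds this below by `(y - x)((5/11) f m₁ + (6/11) f m₂)`, where `m₁, m₂` are the
midpoints of these intervals, and `(5/11) m₁ + (6/11) m₂ = (x+y)/2`. For the upper bound,
`F y - F x` minus the rule is `(F p - F x) + (3/11)(F y - F q) - 2(F q - F p)`: the right
Hermite–Hadamard inequality on `[p, q]`, convexity writing `p` and `q` through the midpoints of
`[x, p]` and `[q, y]`, and the left inequality on these two intervals make it nonnegative.

Both Hermite–Hadamard inequalities come from the symmetrisation `f t + f (a + b - t)`, which
lies between `2 f ((a+b)/2)` and `f a + f b` on `[a, b]` and integrates to `2 ∫ₐᵇ f`.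
-/

open Set Filter Topology MeasureTheory intervalIntegral

theorem IntervalIntegrable.comp_add_sub {E : Type*} [NormedAddCommGroup E] {f : ℝ → E}
    {a b : ℝ} (hf : IntervalIntegrable f volume a b) :
    IntervalIntegrable (fun t => f (a + b - t)) volume a b := by
  simpa using (hf.comp_sub_left (a + b)).symm

theorem intervalIntegral.integral_comp_add_sub {E : Type*} [NormedAddCommGroup E]
    [NormedSpace ℝ E] (f : ℝ → E) (a b : ℝ) :
    ∫ t in a..b, f (a + b - t) = ∫ t in a..b, f t := by
  rw [integral_comp_sub_left, add_sub_cancel_right, add_sub_cancel_left]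

theorem intervalIntegral.integral_eq_sub_of_hasDerivWithinAt_of_subset {s : Set ℝ}
    {f F : ℝ → ℝ} {a b : ℝ} (hab : a ≤ b) (hs : Icc a b ⊆ s)
    (hF : ∀ t ∈ s, HasDerivWithinAt F (f t) s t) (hfi : IntervalIntegrable f volume a b) :
    ∫ t in a..b, f t = F b - F a := by
  refine integral_eq_sub_of_hasDeriv_right_of_le hab
    (fun t ht => (hF t (hs ht)).continuousWithinAt.mono hs) (fun t ht => ?_) hfi
  have hs_nhds : s ∈ 𝓝[Ioi t] t :=
    nhdsWithin_le_nhds (mem_of_superset (Icc_mem_nhds ht.1 ht.2) hs)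
  exact (hF t (hs (Ioo_subset_Icc_self ht))).mono_of_mem_nhdsWithin hs_nhds

namespace ConvexOn

variable {s : Set ℝ} {f F : ℝ → ℝ} {a b : ℝ}

theorem map_le_of_eq (hf : ConvexOn ℝ s f) {u v α β z : ℝ} (hu : u ∈ s) (hv : v ∈ s)
    (hα : 0 ≤ α) (hβ : 0 ≤ β) (hαβ : α + β = 1) (hz : α * u + β * v = z) :
    f z ≤ α * f u + β * f v :=
  hz ▸ hf.2 hu hv hα hβ hαβ

theorem map_add_map_add_sub_le (hf : ConvexOn ℝ s f) {t : ℝ} (ha : a ∈ s) (hb : b ∈ s)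
    (ht : t ∈ segment ℝ a b) : f t + f (a + b - t) ≤ f a + f b := by
  obtain ⟨α, β, hα, hβ, hαβ, rfl⟩ := ht
  simp only [smul_eq_mul]
  have h₁ := hf.map_le_of_eq ha hb hα hβ hαβ rfl
  have h₂ := hf.map_le_of_eq ha hb hβ hα (by linarith)
    (by linear_combination (a + b) * hαβ : β * a + α * b = a + b - (α * a + β * b))
  linear_combination h₁ + h₂ + (f a + f b) * hαβ

theorem sub_mul_map_midpoint_le_integral (hf : ConvexOn ℝ (Icc a b) f)
    (hfi : IntervalIntegrable f volume a b) (hab : a ≤ b) :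
    (b - a) * f ((a + b) / 2) ≤ ∫ t in a..b, f t := by
  have hmid : ∀ t ∈ Icc a b, 2 * f ((a + b) / 2) ≤ f t + f (a + b - t) := fun t ht => by
    linarith [hf.map_le_of_eq ht ⟨by linarith [ht.2], by linarith [ht.1]⟩
      (by norm_num : (0 : ℝ) ≤ 1 / 2) (by norm_num : (0 : ℝ) ≤ 1 / 2) (by norm_num)
      (by ring : 1 / 2 * t + 1 / 2 * (a + b - t) = (a + b) / 2)]
  have h := integral_mono_on hab intervalIntegrable_const (hfi.add hfi.comp_add_sub) hmid
  rw [integral_add hfi hfi.comp_add_sub, integral_comp_add_sub, intervalIntegral.integral_const,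
    smul_eq_mul] at h
  linarith

theorem integral_le_sub_mul_add_div_two (hf : ConvexOn ℝ (Icc a b) f)
    (hfi : IntervalIntegrable f volume a b) (hab : a ≤ b) :
    ∫ t in a..b, f t ≤ (b - a) * (f a + f b) / 2 := by
  have hchord : ∀ t ∈ Icc a b, f t + f (a + b - t) ≤ f a + f b := fun t ht =>
    hf.map_add_map_add_sub_le (left_mem_Icc.2 hab) (right_mem_Icc.2 hab) (segment_eq_Icc hab ▸ ht)
  have h := integral_mono_on hab (hfi.add hfi.comp_add_sub) intervalIntegrable_const hchord
  rw [integral_add hfi hfi.comp_add_sub, integral_comp_add_sub, intervalIntegral.integral_const,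
    smul_eq_mul] at h
  linarith

theorem sub_mul_map_midpoint_le_sub (hf : ConvexOn ℝ s f) (hfc : ContinuousOn f s)
    (hF : ∀ t ∈ s, HasDerivWithinAt F (f t) s t) (hab : a ≤ b) (hs : Icc a b ⊆ s) :
    (b - a) * f ((a + b) / 2) ≤ F b - F a := by
  have hfi := (hfc.mono (uIcc_of_le hab ▸ hs)).intervalIntegrable (μ := volume)
  rw [← integral_eq_sub_of_hasDerivWithinAt_of_subset hab hs hF hfi]
  exact (hf.subset hs (convex_Icc a b)).sub_mul_map_midpoint_le_integral hfi hab

theorem sub_le_sub_mul_add_div_two (hf : ConvexOn ℝ s f) (hfc : ContinuousOn f s)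
    (hF : ∀ t ∈ s, HasDerivWithinAt F (f t) s t) (hab : a ≤ b) (hs : Icc a b ⊆ s) :
    F b - F a ≤ (b - a) * (f a + f b) / 2 := by
  have hfi := (hfc.mono (uIcc_of_le hab ▸ hs)).intervalIntegrable (μ := volume)
  rw [← integral_eq_sub_of_hasDerivWithinAt_of_subset hab hs hF hfi]
  exact (hf.subset hs (convex_Icc a b)).integral_le_sub_mul_add_div_two hfi hab

end ConvexOn

noncomputable def threePointRule (F : ℝ → ℝ) (x y : ℝ) : ℝ :=
  -3 * F ((3 * x + y) / 4) + (25 / 11) * F ((11 * x + 9 * y) / 20) + (8 / 11) * F y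

section ThreePointRule

variable {x y : ℝ} {f F : ℝ → ℝ}

theorem ConvexOn.sub_mul_map_midpoint_le_threePointRule (hf : ConvexOn ℝ (Icc x y) f)
    (hfc : ContinuousOn f (Icc x y)) (hF : ∀ t ∈ Icc x y, HasDerivWithinAt F (f t) (Icc x y) t)
    (hxy : x ≤ y) : (y - x) * f ((x + y) / 2) ≤ threePointRule F x y := by
  unfold threePointRule
  set p := (3 * x + y) / 4 with hp
  set q := (11 * x + 9 * y) / 20 with hq
  clear_value p q
  have hpq := hf.sub_mul_map_midpoint_le_sub hfc hF (a := p) (b := q) (by linarith)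
    (Icc_subset_Icc (by linarith) (by linarith))
  have hpy := hf.sub_mul_map_midpoint_le_sub hfc hF (a := p) (b := y) (by linarith)
    (Icc_subset_Icc (by linarith) le_rfl)
  have hmid := hf.map_le_of_eq (u := (p + q) / 2) (v := (p + y) / 2) (α := 5 / 11) (β := 6 / 11)
    ⟨by linarith, by linarith⟩ ⟨by linarith, by linarith⟩ (by norm_num) (by norm_num)
    (by norm_num) (by linarith : _ = (x + y) / 2)
  subst hp hq
  linear_combination (25 / 11) * hpq + (8 / 11) * hpy + (y - x) * hmid

theorem ConvexOn.threePointRule_le_sub (hf : ConvexOn ℝ (Icc x y) f)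
    (hfc : ContinuousOn f (Icc x y)) (hF : ∀ t ∈ Icc x y, HasDerivWithinAt F (f t) (Icc x y) t)
    (hxy : x ≤ y) : threePointRule F x y ≤ F y - F x := by
  unfold threePointRule
  set p := (3 * x + y) / 4 with hp
  set q := (11 * x + 9 * y) / 20 with hq
  clear_value p q
  have hxp := hf.sub_mul_map_midpoint_le_sub hfc hF (a := x) (b := p) (by linarith)
    (Icc_subset_Icc le_rfl (by linarith))
  have hqy := hf.sub_mul_map_midpoint_le_sub hfc hF (a := q) (b := y) (by linarith)
    (Icc_subset_Icc (by linarith) le_rfl)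
  have hpq := hf.sub_le_sub_mul_add_div_two hfc hF (a := p) (b := q) (by linarith)
    (Icc_subset_Icc (by linarith) (by linarith))
  have hfp := hf.map_le_of_eq (u := (x + p) / 2) (v := (q + y) / 2) (α := 19 / 24) (β := 5 / 24)
    ⟨by linarith, by linarith⟩ ⟨by linarith, by linarith⟩ (by norm_num) (by norm_num)
    (by norm_num) (by linarith : _ = p)
  have hfq := hf.map_le_of_eq (u := (x + p) / 2) (v := (q + y) / 2) (α := 11 / 24) (β := 13 / 24)
    ⟨by linarith, by linarith⟩ ⟨by linarith, by linarith⟩ (by norm_num) (by norm_num)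
    (by norm_num) (by linarith : _ = q)
  subst hp hq
  linear_combination hxp + (3 / 11) * hqy + 2 * hpq + (y - x) / 5 * (hfp + hfq)

end ThreePointRule

/-- Remark 3: the inequality
`f((x+y)/2) ≤ (-3F((3x+y)/4) + (25/11)F((11x+9y)/20) + (8/11)F(y))/(y-x) ≤ (1/(y-x))∫ₓʸ f`
holds for every continuous convex `f` and its antiderivative `F`. -/
theorem stmt_3 (x y : ℝ) (hxy : x < y) (f F : ℝ → ℝ)
    (hf_cont : ContinuousOn f (Set.Icc x y)) (hf_conv : ConvexOn ℝ (Set.Icc x y) f)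
    (hF : ∀ t ∈ Set.Icc x y, HasDerivWithinAt F (f t) (Set.Icc x y) t) :
    f ((x + y) / 2)
        ≤ (-3 * F ((3 * x + y) / 4) + (25 / 11) * F ((11 * x + 9 * y) / 20)
            + (8 / 11) * F y) / (y - x) ∧
      (-3 * F ((3 * x + y) / 4) + (25 / 11) * F ((11 * x + 9 * y) / 20)
            + (8 / 11) * F y) / (y - x)
        ≤ (1 / (y - x)) * ∫ t in x..y, f t := by
  have hL : 0 < y - x := sub_pos.2 hxy
  rw [integral_eq_sub_of_hasDerivWithinAt_of_subset hxy.le subset_rfl hF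
      (hf_cont.mono (uIcc_of_le hxy.le).subset).intervalIntegrable, one_div_mul_eq_div,
    le_div_iff₀ hL, div_le_div_iff_of_pos_right hL, mul_comm]
  exact ⟨hf_conv.sub_mul_map_midpoint_le_threePointRule hf_cont hF hxy.le,
    hf_conv.threePointRule_le_sub hf_cont hF hxy.le⟩
end

section
/- Let a < b be real numbers, let F₁, F₂ : [a,b] → ℝ be integrable, let n ≥ 2 be an even natural number, and suppose the pair (F₁,F₂) crosses n times at points a = x₀ < x₁ < ⋯ < xₙ < x_{n+1} = b, i.e. F₁ − F₂ ≥ 0 on (xᵢ, x_{i+1}) for even i, F₁ − F₂ ≤ 0 on (xᵢ, x_{i+1}) for odd i, and ∫_{xᵢ}^{x_{i+1}} (F₁(t) − F₂(t)) dt ≠ 0 for every i = 0, 1, …, n. If moreover ∫ₐᵇ (F₁(t) − F₂(t)) dt = 0, then ∫ₐ^{xₙ} (F₁(t) − F₂(t)) dt < 0; in particular the Levin–Stečkin condition ∫ₐᶻ (F₁(t) − F₂(t)) dt ≥ 0 for all z ∈ (a,b) fails. -/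
open MeasureTheory

/-- Lemma 2(i), via the Levin–Stečkin criterion: if `(F₁, F₂)` crosses an even number
`n ≥ 2` of times at `a = x₀ < x₁ < ⋯ < xₙ < x_{n+1} = b` and
`∫ₐᵇ (F₁ - F₂) = 0`, then `∫ₐ^{xₙ} (F₁ - F₂) < 0`; in particular the Levin–Stečkin
condition `∫ₐᶻ (F₁ - F₂) ≥ 0` for all `z ∈ (a, b)` fails. -/
theorem stmt_5 (a b : ℝ) (hab : a < b) (F₁ F₂ : ℝ → ℝ)
    (hF₁ : IntegrableOn F₁ (Set.Icc a b))
    (hF₂ : IntegrableOn F₂ (Set.Icc a b))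
    (n : ℕ) (hn : 2 ≤ n) (hneven : Even n)
    (X : ℕ → ℝ) (hX0 : X 0 = a) (hXlast : X (n + 1) = b)
    (hXmono : ∀ i ≤ n, X i < X (i + 1))
    (hsign_even : ∀ i ≤ n, Even i → ∀ t ∈ Set.Ioo (X i) (X (i + 1)), 0 ≤ F₁ t - F₂ t)
    (hsign_odd : ∀ i ≤ n, Odd i → ∀ t ∈ Set.Ioo (X i) (X (i + 1)), F₁ t - F₂ t ≤ 0)
    (hA_ne : ∀ i ≤ n, (∫ t in X i..X (i + 1), (F₁ t - F₂ t)) ≠ 0)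
    (hint : (∫ t in a..b, (F₁ t - F₂ t)) = 0) :
    (∫ t in a..X n, (F₁ t - F₂ t)) < 0 ∧
      ¬ (∀ z ∈ Set.Ioo a b, 0 ≤ ∫ t in a..z, (F₁ t - F₂ t)) := by
  set g : ℝ → ℝ := fun t => F₁ t - F₂ t with hg_def
  -- a < X n
  have key : ∀ i, i ≤ n → X 0 < X (i + 1) := by
    intro i
    induction i with
    | zero => intro h; exact hXmono 0 (by omega)
    | succ k ih => intro h; exact (ih (by omega)).trans (hXmono (k + 1) h)
  obtain ⟨m, hm⟩ : ∃ m, n = m + 1 := ⟨n - 1, by omega⟩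
  have haXn : a < X n := by rw [← hX0, hm]; exact key m (by omega)
  have hXnb : X n < b := by rw [← hXlast]; exact hXmono n le_rfl
  -- integrability
  have hg : IntegrableOn g (Set.Icc a b) := hF₁.sub hF₂
  have h1 : IntervalIntegrable g volume a (X n) := by
    apply (hg.mono_set _).intervalIntegrable
    rw [Set.uIcc_of_le haXn.le]
    exact Set.Icc_subset_Icc le_rfl hXnb.le
  have h2 : IntervalIntegrable g volume (X n) b := by
    apply (hg.mono_set _).intervalIntegrable
    rw [Set.uIcc_of_le hXnb.le]
    exact Set.Icc_subset_Icc haXn.le le_rfl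
  -- nonnegativity a.e. on [X n, b]
  have hnn : ∀ t ∈ Set.Ioo (X n) b, 0 ≤ g t := by
    intro t ht
    have := hsign_even n le_rfl hneven t (by rwa [hXlast])
    simpa [hg_def] using this
  have hae : ∀ᵐ t ∂(volume.restrict (Set.Icc (X n) b)), 0 ≤ g t := by
    have hnull : (volume : Measure ℝ) ({X n, b} : Set ℝ) = 0 :=
      ((Set.finite_singleton b).insert (X n)).measure_zero volume
    have h1' : ∀ᵐ t : ℝ, t ∉ ({X n, b} : Set ℝ) :=
      (measure_eq_zero_iff_ae_notMem (μ := volume)).mp hnull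
    have h2' : ∀ᵐ t ∂(volume.restrict (Set.Icc (X n) b)),
        t ∉ ({X n, b} : Set ℝ) := ae_restrict_of_ae h1'
    filter_upwards [h2', ae_restrict_mem measurableSet_Icc] with t ht1 ht2
    apply hnn
    constructor
    · rcases lt_or_eq_of_le ht2.1 with h | h
      · exact h
      · exact absurd h.symm (fun hh => ht1 (by simp [hh]))
    · rcases lt_or_eq_of_le ht2.2 with h | h
      · exact h
      · exact absurd h (fun hh => ht1 (by simp [hh]))
  have hnonneg : 0 ≤ ∫ t in X n..b, g t :=
    intervalIntegral.integral_nonneg_of_ae_restrict hXnb.le hae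
  have hne : (∫ t in X n..b, g t) ≠ 0 := by
    have := hA_ne n le_rfl
    rwa [hXlast] at this
  have hpos : 0 < ∫ t in X n..b, g t := hnonneg.lt_of_ne' hne
  have hsplit : (∫ t in a..X n, g t) + (∫ t in X n..b, g t) = ∫ t in a..b, g t :=
    intervalIntegral.integral_add_adjacent_intervals h1 h2
  have hmain : (∫ t in a..X n, g t) < 0 := by
    rw [hint] at hsplit
    linarith
  refine ⟨hmain, ?_⟩
  intro h
  exact absurd (h (X n) ⟨haXn, hXnb⟩) (not_le.mpr hmain)
end

section
/- Let a < b be real numbers, let F₁, F₂ : [a,b] → ℝ be integrable, let n ≥ 1 be an odd natural number, and suppose the pair (F₁,F₂) crosses n times at points a = x₀ < x₁ < ⋯ < xₙ < x_{n+1} = b, i.e. F₁ − F₂ ≥ 0 on (xᵢ, x_{i+1}) for even i, F₁ − F₂ ≤ 0 on (xᵢ, x_{i+1}) for odd i, and ∫_{xᵢ}^{x_{i+1}} (F₁(t) − F₂(t)) dt ≠ 0 for every i. Assume ∫ₐᵇ (F₁(t) − F₂(t)) dt = 0 and define Aᵢ := ∫_{xᵢ}^{x_{i+1}} (F₁(t)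 − F₂(t)) dt for even i and Aᵢ := ∫_{xᵢ}^{x_{i+1}} (F₂(t) − F₁(t)) dt for odd i (so every Aᵢ > 0). Then the following are equivalent: (a) for every odd m with 1 ≤ m ≤ n−2 one has A₀ − A₁ + A₂ − ⋯ + A_{m−1} ≥ A_m; (b) ∫ₐᶻ (F₁(t) − F₂(t)) dt ≥ 0 for all z ∈ (a,b). -/
open MeasureTheory

/-- Lemma 2(ii), via the Levin–Stečkin criterion: if `(F₁, F₂)` crosses an odd number
`n ≥ 1` of times at `a = x₀ < x₁ < ⋯ < xₙ < x_{n+1} = b` and `∫ₐᵇ (F₁ - F₂) = 0`, then,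
with `Aᵢ` the (positive) areas between `F₁` and `F₂` over the consecutive subintervals,
the alternating-sum inequalities `A₀ - A₁ + ⋯ + A_{m-1} ≥ A_m` for odd `m ≤ n - 2` hold
if and only if `∫ₐᶻ (F₁ - F₂) ≥ 0` for all `z ∈ (a, b)`. -/
theorem stmt_6 (a b : ℝ) (hab : a < b) (F₁ F₂ : ℝ → ℝ)
    (hF₁ : IntegrableOn F₁ (Set.Icc a b))
    (hF₂ : IntegrableOn F₂ (Set.Icc a b))
    (n : ℕ) (hn : 1 ≤ n) (hnodd : Odd n)
    (X : ℕ → ℝ) (hX0 : X 0 = a) (hXlast : X (n + 1) = b)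
    (hXmono : ∀ i ≤ n, X i < X (i + 1))
    (hsign_even : ∀ i ≤ n, Even i → ∀ t ∈ Set.Ioo (X i) (X (i + 1)), 0 ≤ F₁ t - F₂ t)
    (hsign_odd : ∀ i ≤ n, Odd i → ∀ t ∈ Set.Ioo (X i) (X (i + 1)), F₁ t - F₂ t ≤ 0)
    (hA_ne : ∀ i ≤ n, (∫ t in X i..X (i + 1), (F₁ t - F₂ t)) ≠ 0)
    (hint : (∫ t in a..b, (F₁ t - F₂ t)) = 0)
    (A : ℕ → ℝ)
    (hA : ∀ i, A i = if Even i then ∫ t in X i..X (i + 1), (F₁ t - F₂ t)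
                     else ∫ t in X i..X (i + 1), (F₂ t - F₁ t)) :
    (∀ m, Odd m → 1 ≤ m → m ≤ n - 2 →
        A m ≤ ∑ j ∈ Finset.range m, (-1 : ℝ) ^ j * A j)
      ↔ (∀ z ∈ Set.Ioo a b, 0 ≤ ∫ t in a..z, (F₁ t - F₂ t)) := by
  have hf : IntegrableOn (fun t => F₁ t - F₂ t) (Set.Icc a b) := hF₁.sub hF₂
  have hXle0 : ∀ j, j ≤ n + 1 → ∀ i, i ≤ j → X i ≤ X j := by
    intro j
    induction j with
    | zero => intro _ i hi; simp [Nat.le_zero.mp hi]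
    | succ k ih =>
      intro hk i hi
      rcases Nat.lt_or_ge i (k + 1) with h | h
      · exact le_trans (ih (by omega) i (by omega)) (le_of_lt (hXmono k (by omega)))
      · have : i = k + 1 := le_antisymm hi h
        simp [this]
  have hXle : ∀ i j, i ≤ j → j ≤ n + 1 → X i ≤ X j := fun i j hij hj => hXle0 j hj i hij
  have hXlt : ∀ i j, i < j → j ≤ n + 1 → X i < X j := by
    intro i j hij hj
    calc X i < X (i + 1) := hXmono i (by omega)
    _ ≤ X j := hXle (i + 1) j (by omega) hj
  have haX : ∀ i, i ≤ n + 1 → a ≤ X i := fun i hi => hX0 ▸ hXle 0 i (Nat.zero_le _) hi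
  have hXb : ∀ i, i ≤ n + 1 → X i ≤ b := fun i hi => hXlast ▸ hXle i (n + 1) hi le_rfl
  have hii : ∀ x y, a ≤ x → x ≤ y → y ≤ b →
      IntervalIntegrable (fun t => F₁ t - F₂ t) volume x y := by
    intro x y hax hxy hyb
    apply (hf.mono_set _).intervalIntegrable
    rw [Set.uIcc_of_le hxy]
    exact Set.Icc_subset_Icc hax hyb
  -- relate pieces to A
  have hAj : ∀ j, j ≤ n → (-1 : ℝ) ^ j * A j = ∫ t in X j..X (j + 1), (F₁ t - F₂ t) := by
    intro j hj
    rcases Nat.even_or_odd j with he | ho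
    · rw [hA j, if_pos he, he.neg_one_pow, one_mul]
    · rw [hA j, if_neg (Nat.not_even_iff_odd.mpr ho), ho.neg_one_pow, neg_one_mul]
      rw [show (∫ t in X j..X (j + 1), (F₂ t - F₁ t))
          = ∫ t in X j..X (j + 1), -(F₁ t - F₂ t) by congr 1; funext t; ring,
        intervalIntegral.integral_neg, neg_neg]
  -- telescoping
  have hGX : ∀ k, k ≤ n + 1 → (∫ t in a..X k, (F₁ t - F₂ t))
      = ∑ j ∈ Finset.range k, (-1 : ℝ) ^ j * A j := by
    intro k hk
    induction k with
    | zero => simp [hX0]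
    | succ m ih =>
      rw [Finset.sum_range_succ, ← ih (by omega), hAj m (by omega),
        intervalIntegral.integral_add_adjacent_intervals
          (hii a (X m) le_rfl (haX m (by omega)) (hXb m (by omega)))
          (hii (X m) (X (m + 1)) (haX m (by omega)) (le_of_lt (hXmono m (by omega)))
            (hXb (m + 1) hk))]
  have hsum0 : ∑ j ∈ Finset.range (n + 1), (-1 : ℝ) ^ j * A j = 0 := by
    rw [← hGX (n + 1) le_rfl, hXlast, hint]
  -- sign of integrals over pieces of subintervals
  have hseg : ∀ i, i ≤ n → ∀ x y, X i ≤ x → x ≤ y → y ≤ X (i + 1) →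
      (Even i → 0 ≤ ∫ t in x..y, (F₁ t - F₂ t)) ∧
      (Odd i → (∫ t in x..y, (F₁ t - F₂ t)) ≤ 0) := by
    intro i hi x y hx hxy hy
    have hmem : ∀ᵐ t ∂(volume.restrict (Set.Icc x y)), t ∈ Set.Ioo (X i) (X (i + 1)) ∪
        {X i, X (i + 1)} := by
      filter_upwards [ae_restrict_mem measurableSet_Icc] with t ht
      rcases eq_or_lt_of_le (le_trans hx ht.1) with h1 | h1
      · right; left; exact h1.symm
      rcases eq_or_lt_of_le (le_trans ht.2 hy) with h2 | h2
      · right; right; exact h2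
      · left; exact ⟨h1, h2⟩
    have hne : ∀ᵐ t ∂(volume.restrict (Set.Icc x y)), t ≠ X i ∧ t ≠ X (i + 1) := by
      apply ae_restrict_of_ae
      have h1 : ∀ᵐ t : ℝ ∂volume, t ≠ X i := by
        rw [ae_iff]; simpa using Real.volume_singleton (a := X i)
      have h2 : ∀ᵐ t : ℝ ∂volume, t ≠ X (i + 1) := by
        rw [ae_iff]; simpa using Real.volume_singleton (a := X (i + 1))
      filter_upwards [h1, h2] with t ht1 ht2 using ⟨ht1, ht2⟩
    have hIoo : ∀ᵐ t ∂(volume.restrict (Set.Icc x y)), t ∈ Set.Ioo (X i) (X (i + 1)) := by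
      filter_upwards [hmem, hne] with t hm hn'
      rcases hm with h | h
      · exact h
      · rcases h with h | h
        · exact absurd h hn'.1
        · exact absurd h hn'.2
    constructor
    · intro hieven
      apply intervalIntegral.integral_nonneg_of_ae_restrict hxy
      filter_upwards [hIoo] with t ht
      exact hsign_even i hi hieven t ht
    · intro hiodd
      have : 0 ≤ ∫ t in x..y, -(F₁ t - F₂ t) := by
        apply intervalIntegral.integral_nonneg_of_ae_restrict hxy
        filter_upwards [hIoo] with t ht
        simpa using hsign_odd i hi hiodd t ht
      rw [intervalIntegral.integral_neg] at this
      linarith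
  constructor
  · -- (a) → (b)
    intro hcond z hz
    -- partial sums are nonneg at even indices
    have hP : ∀ k, k ≤ n + 1 → Even k → 0 ≤ ∑ j ∈ Finset.range k, (-1 : ℝ) ^ j * A j := by
      intro k hk hke
      rcases Nat.eq_zero_or_pos k with h0 | hpos
      · simp [h0]
      obtain ⟨m, rfl⟩ : ∃ m, k = m + 1 := ⟨k - 1, by omega⟩
      have hmodd : Odd m := by
        rw [Nat.odd_iff]; rw [Nat.even_iff] at hke; omega
      rcases le_or_gt m (n - 2) with hle | hgt
      · have h := hcond m hmodd (by rw [Nat.odd_iff] at hmodd; omega) hle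
        rw [Finset.sum_range_succ, hmodd.neg_one_pow, neg_one_mul]
        linarith
      · have hm : m = n := by
          rw [Nat.odd_iff] at hmodd hnodd; omega
        rw [hm, hsum0]
    -- locate z
    classical
    set i := Nat.findGreatest (fun i => X i ≤ z) n with hidef
    have hiz : X i ≤ z := Nat.findGreatest_spec (P := fun i => X i ≤ z) (Nat.zero_le n)
      (show X 0 ≤ z by rw [hX0]; exact hz.1.le)
    have hile : i ≤ n := Nat.findGreatest_le n
    have hzi : z < X (i + 1) := by
      rcases eq_or_lt_of_le hile with heq | hlt
      · rw [heq, hXlast]; exact hz.2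
      · by_contra h
        push_neg at h
        exact Nat.findGreatest_is_greatest (Nat.lt_succ_self i) (by omega) h
    have hdecomp : (∫ t in a..z, (F₁ t - F₂ t)) =
        (∫ t in a..X i, (F₁ t - F₂ t)) + ∫ t in X i..z, (F₁ t - F₂ t) :=
      (intervalIntegral.integral_add_adjacent_intervals
        (hii a (X i) le_rfl (haX i (by omega)) (hXb i (by omega)))
        (hii (X i) z (haX i (by omega)) hiz hz.2.le)).symm
    rcases Nat.even_or_odd i with he | ho
    · rw [hdecomp, hGX i (by omega)]
      have h1 := hP i (by omega) he
      have h2 := (hseg i hile (X i) z le_rfl hiz hzi.le).1 he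
      linarith
    · have hdecomp2 : (∫ t in a..X (i + 1), (F₁ t - F₂ t)) =
          (∫ t in a..z, (F₁ t - F₂ t)) + ∫ t in z..X (i + 1), (F₁ t - F₂ t) :=
        (intervalIntegral.integral_add_adjacent_intervals
          (hii a z le_rfl hz.1.le hz.2.le)
          (hii z (X (i + 1)) hz.1.le hzi.le (hXb (i + 1) (by omega)))).symm
      have h1 := hP (i + 1) (by omega) (by rw [Nat.even_add_one]; exact Nat.not_even_iff_odd.mpr ho)
      rw [← hGX (i + 1) (by omega), hdecomp2] at h1
      have h2 := (hseg i hile z (X (i + 1)) hiz hzi.le le_rfl).2 ho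
      linarith
  · -- (b) → (a)
    intro hpos m hmodd hm1 hm2
    have hmn : m + 2 ≤ n := by omega
    have hzmem : X (m + 1) ∈ Set.Ioo a b :=
      ⟨hX0 ▸ hXlt 0 (m + 1) (by omega) (by omega),
       hXlast ▸ hXlt (m + 1) (n + 1) (by omega) le_rfl⟩
    have h := hpos _ hzmem
    rw [hGX (m + 1) (by omega), Finset.sum_range_succ, hmodd.neg_one_pow, neg_one_mul] at h
    linarith
end

section
/- Let x < y be real numbers, let α₁, α₂, α₃, α₄ satisfy 1 ≥ α₁ > α₂ > α₃ > α₄ ≥ 0, and let a₁, a₂, a₃, a₄ be real numbers with a₁ + a₂ + a₃ + a₄ = 0. If for every continuous convex function f : [x,y] → ℝ and every antiderivative F of f the inequality f((x+y)/2) ≤ (Σ_{i=1}^{4} aᵢF(αᵢx + (1−αᵢ)y))/(y−x) holds, then a₁(α₂−α₁) + (a₁+a₂)(α₃−α₂) + (a₁+a₂+a₃)(α₄−α₃) = 1 and a₁(α₂²−α₁²) + (a₁+a₂)(α₃²−α₂²) + (a₁+a₂+a₃)(α₄²−α₃²) = 1. -/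
/-!
An affine function is both convex and concave, so applying the hypothesis to `f` and `-f`
with `f(t) = c t + d` and `F(t) = c t² / 2 + d t` makes it an equality. With `f = 1` and
`f = t` this equality reads `∑ aᵢ αᵢ = -1` and `∑ aᵢ αᵢ² = -1` (using `∑ aᵢ = 0`), and (M1), (E1)
are these two moment identities after summation by parts.
-/

open Finset

theorem convexOn_mul_add_const {s : Set ℝ} (hs : Convex ℝ s) (c d : ℝ) :
    ConvexOn ℝ s fun t => c * t + d :=
  ((LinearMap.mul ℝ ℝ c).convexOn hs).add_const d

theorem hasDerivAt_mul_sq_div_two_add_mul (c d t : ℝ) :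
    HasDerivAt (fun s => c * s ^ 2 / 2 + d * s) (c * t + d) t := by
  refine ((((hasDerivAt_pow 2 t).const_mul c).div_const 2).add
    ((hasDerivAt_id' t).const_mul d)).congr_deriv ?_
  push_cast
  ring

section QuadratureRule

variable {ι : Type*} (s : Finset ι) (a α : ι → ℝ) (x y : ℝ)

theorem sum_mul_node (ha : ∑ i ∈ s, a i = 0) :
    ∑ i ∈ s, a i * (α i * x + (1 - α i) * y) = (x - y) * ∑ i ∈ s, a i * α i := by
  have h : ∀ i, a i * (α i * x + (1 - α i) * y) = y * a i + (x - y) * (a i * α i) :=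
    fun i => by ring
  simp only [h, sum_add_distrib, ← mul_sum, ha, mul_zero, zero_add]

theorem sum_mul_node_sq (ha : ∑ i ∈ s, a i = 0) :
    ∑ i ∈ s, a i * (α i * x + (1 - α i) * y) ^ 2
      = 2 * y * (x - y) * ∑ i ∈ s, a i * α i + (x - y) ^ 2 * ∑ i ∈ s, a i * α i ^ 2 := by
  have h : ∀ i, a i * (α i * x + (1 - α i) * y) ^ 2
      = y ^ 2 * a i + 2 * y * (x - y) * (a i * α i) + (x - y) ^ 2 * (a i * α i ^ 2) :=
    fun i => by ring
  simp only [h, sum_add_distrib, ← mul_sum, ha, mul_zero, zero_add]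

def MidpointLeRule : Prop :=
  ∀ f F : ℝ → ℝ, ContinuousOn f (Set.Icc x y) → ConvexOn ℝ (Set.Icc x y) f →
    (∀ t ∈ Set.Icc x y, HasDerivWithinAt F (f t) (Set.Icc x y) t) →
    f ((x + y) / 2) ≤ (∑ i ∈ s, a i * F (α i * x + (1 - α i) * y)) / (y - x)

variable {s a α x y}

theorem MidpointLeRule.eq_of_affine (h : MidpointLeRule s a α x y) (c d : ℝ) :
    c * ((x + y) / 2) + d
      = (∑ i ∈ s, a i * (c * (α i * x + (1 - α i) * y) ^ 2 / 2
          + d * (α i * x + (1 - α i) * y))) / (y - x) := by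
  have rule (c d : ℝ) := h (fun t => c * t + d) (fun t => c * t ^ 2 / 2 + d * t)
    (continuous_const_mul c |>.add continuous_const).continuousOn
    (convexOn_mul_add_const (convex_Icc x y) c d)
    fun t _ => (hasDerivAt_mul_sq_div_two_add_mul c d t).hasDerivWithinAt
  have upper := rule (-c) (-d)
  simp only [neg_mul, ← neg_add, neg_div, mul_neg, sum_neg_distrib] at upper
  exact le_antisymm (rule c d) (neg_le_neg_iff.mp upper)

theorem MidpointLeRule.sum_mul_eq (h : MidpointLeRule s a α x y) (hxy : x < y)
    (ha : ∑ i ∈ s, a i = 0) : ∑ i ∈ s, a i * α i = -1 := by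
  have e := h.eq_of_affine 0 1
  simp only [zero_mul, zero_div, zero_add, one_mul] at e
  rw [sum_mul_node s a α x y ha, eq_div_iff (sub_pos.mpr hxy).ne'] at e
  have hxy' : x - y ≠ 0 := (sub_neg.mpr hxy).ne
  exact mul_left_cancel₀ hxy' (by linear_combination -e)

theorem MidpointLeRule.sum_mul_sq_eq (h : MidpointLeRule s a α x y) (hxy : x < y)
    (ha : ∑ i ∈ s, a i = 0) : ∑ i ∈ s, a i * α i ^ 2 = -1 := by
  have e := h.eq_of_affine 2 0
  simp only [zero_mul, add_zero, mul_div_cancel_left₀ _ (two_ne_zero (α := ℝ))] at e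
  rw [sum_mul_node_sq s a α x y ha, h.sum_mul_eq hxy ha, eq_div_iff (sub_pos.mpr hxy).ne'] at e
  have hxy' : (x - y) ^ 2 ≠ 0 := pow_ne_zero 2 (sub_neg.mpr hxy).ne
  exact mul_left_cancel₀ hxy' (by linear_combination -e)

end QuadratureRule

theorem stmt_7_general (x y : ℝ) (hxy : x < y) (α₁ α₂ α₃ α₄ a₁ a₂ a₃ a₄ : ℝ)
    (ha : a₁ + a₂ + a₃ + a₄ = 0)
    (H : ∀ f F : ℝ → ℝ, ContinuousOn f (Set.Icc x y) → ConvexOn ℝ (Set.Icc x y) f →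
        (∀ t ∈ Set.Icc x y, HasDerivWithinAt F (f t) (Set.Icc x y) t) →
        f ((x + y) / 2)
          ≤ (a₁ * F (α₁ * x + (1 - α₁) * y) + a₂ * F (α₂ * x + (1 - α₂) * y)
              + a₃ * F (α₃ * x + (1 - α₃) * y) + a₄ * F (α₄ * x + (1 - α₄) * y)) / (y - x)) :
    a₁ * (α₂ - α₁) + (a₁ + a₂) * (α₃ - α₂) + (a₁ + a₂ + a₃) * (α₄ - α₃) = 1 ∧
    a₁ * (α₂ ^ 2 - α₁ ^ 2) + (a₁ + a₂) * (α₃ ^ 2 - α₂ ^ 2)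
      + (a₁ + a₂ + a₃) * (α₄ ^ 2 - α₃ ^ 2) = 1 := by
  have rule : MidpointLeRule univ ![a₁, a₂, a₃, a₄] ![α₁, α₂, α₃, α₄] x y := by
    simpa only [MidpointLeRule, Fin.sum_univ_four, Matrix.cons_val] using H
  have hsum : ∑ i, ![a₁, a₂, a₃, a₄] i = 0 := by
    simpa only [Fin.sum_univ_four, Matrix.cons_val] using ha
  have moment₁ := rule.sum_mul_eq hxy hsum
  have moment₂ := rule.sum_mul_sq_eq hxy hsum
  simp only [Fin.sum_univ_four, Matrix.cons_val] at moment₁ moment₂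
  exact ⟨by linear_combination α₄ * ha - moment₁, by linear_combination α₄ ^ 2 * ha - moment₂⟩

/-- Lemma 3, first part: if the inequality
`f((x+y)/2) ≤ (∑ aᵢ F(αᵢx + (1-αᵢ)y))/(y-x)` holds for every continuous convex `f`
and every antiderivative `F` of `f`, then conditions (M1) and (E1) hold. -/
theorem stmt_7 (x y : ℝ) (hxy : x < y) (α₁ α₂ α₃ α₄ a₁ a₂ a₃ a₄ : ℝ)
    (hα₁ : α₁ ≤ 1) (h12 : α₂ < α₁) (h23 : α₃ < α₂) (h34 : α₄ < α₃) (hα₄ : 0 ≤ α₄)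
    (ha : a₁ + a₂ + a₃ + a₄ = 0)
    (H : ∀ f F : ℝ → ℝ, ContinuousOn f (Set.Icc x y) → ConvexOn ℝ (Set.Icc x y) f →
        (∀ t ∈ Set.Icc x y, HasDerivWithinAt F (f t) (Set.Icc x y) t) →
        f ((x + y) / 2)
          ≤ (a₁ * F (α₁ * x + (1 - α₁) * y) + a₂ * F (α₂ * x + (1 - α₂) * y)
              + a₃ * F (α₃ * x + (1 - α₃) * y) + a₄ * F (α₄ * x + (1 - α₄) * y)) / (y - x)) :
    a₁ * (α₂ - α₁) + (a₁ + a₂) * (α₃ - α₂) + (a₁ + a₂ + a₃) * (α₄ - α₃) = 1 ∧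
    a₁ * (α₂ ^ 2 - α₁ ^ 2) + (a₁ + a₂) * (α₃ ^ 2 - α₂ ^ 2)
      + (a₁ + a₂ + a₃) * (α₄ ^ 2 - α₃ ^ 2) = 1 :=
  stmt_7_general x y hxy α₁ α₂ α₃ α₄ a₁ a₂ a₃ a₄ ha H
end

section
/- Let x < y be real numbers, let α₁, α₂, α₃, α₄ satisfy 1 = α₁ > α₂ > α₃ > α₄ = 0, let a₁, a₂, a₃, a₄ be reals with a₁ + a₂ + a₃ + a₄ = 0, and suppose conditions (M1) and (E1) hold. If a₁ > −1, then for every continuous convex function f : [x,y] → ℝ and every antiderivative F of f one has (Σ_{i=1}^{4} aᵢF(αᵢx + (1−αᵢ)y))/(y−x) ≤ (1/(y−x)) ∫ₓʸ f(t) dt ≤ (f(x)+f(y))/2. -/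
/-!
Put `p = α₂x + (1-α₂)y` and `q = α₃x + (1-α₃)y`, so that `x < p < q < y`, and let
`c₁ = 1 + a₁`, `c₂ = c₁ + a₂`, `c₃ = c₂ + a₃`. Since `∑ aᵢ = 0`,
`F y - F x - ∑ aᵢ F(αᵢx + (1-αᵢ)y) = c₁ ∫ₓᵖ f + c₂ ∫ₚ^q f + c₃ ∫_q^y f`.
Conditions (M1) and (E1) say exactly that this weighted integral vanishes on affine functions,
and together with `c₁ > 0` they force `c₂ < 0 < c₃`. The secant line of `f` through `p` and `q`
lies below `f` on `[x, p]` and `[q, y]` and above it on `[p, q]`, so replacing `f` by it can only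
decrease each weighted term, to a total of `0`. The right inequality is the trapezoid bound:
`f` lies below its chord over `[x, y]`.
-/

open Set intervalIntegral

theorem integral_const_add_mul_sub (c d r u v : ℝ) :
    ∫ t in u..v, (c + d * (t - r)) = c * (v - u) + d * ((v - r) ^ 2 - (u - r) ^ 2) / 2 := by
  rw [integral_comp_sub_right (fun t => c + d * t), integral_add intervalIntegrable_const
    (intervalIntegrable_id.const_mul d), integral_const_mul, integral_id, integral_const,
    smul_eq_mul]
  ring

theorem integral_eq_sub_of_hasDerivWithinAt_Icc {f F : ℝ → ℝ} {a b : ℝ} (hab : a ≤ b)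
    (hF : ∀ t ∈ Icc a b, HasDerivWithinAt F (f t) (Icc a b) t)
    (hf : IntervalIntegrable f MeasureTheory.volume a b) :
    ∫ t in a..b, f t = F b - F a :=
  integral_eq_sub_of_hasDerivAt_of_le hab (fun t ht => (hF t ht).continuousWithinAt)
    (fun t ht => (hF t (Ioo_subset_Icc_self ht)).hasDerivAt (Icc_mem_nhds ht.1 ht.2)) hf

theorem add_slope_mul_sub (f : ℝ → ℝ) (p t : ℝ) : f p + slope f p t * (t - p) = f t := by
  simpa [mul_comm, add_comm] using sub_smul_slope_vadd f p t

theorem weights_sign_of_moments_eq_zero {x p q y c₁ c₂ c₃ : ℝ} (hxp : x < p) (hpq : p < q) (hqy : q < y)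
    (hc₁ : 0 < c₁) (h₀ : c₁ * (p - x) + c₂ * (q - p) + c₃ * (y - q) = 0)
    (h₁ : c₁ * (p ^ 2 - x ^ 2) + c₂ * (q ^ 2 - p ^ 2) + c₃ * (y ^ 2 - q ^ 2) = 0) :
    c₂ < 0 ∧ 0 < c₃ := by
  have hkey : c₃ * ((y - q) * (y - p)) = c₁ * ((p - x) * (q - x)) := by
    linear_combination h₁ - (p + q) * h₀
  have hc₃ : 0 < c₃ := by
    have : 0 < c₃ * ((y - q) * (y - p)) := hkey ▸ mul_pos hc₁ (by nlinarith)
    exact (mul_pos_iff_of_pos_right (by nlinarith)).1 this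
  refine ⟨neg_of_mul_neg_left (a := c₂) ?_ (sub_nonneg.2 hpq.le), hc₃⟩
  nlinarith

namespace ConvexOn

section secant

variable {s : Set ℝ} {f : ℝ → ℝ} {p q t : ℝ}

theorem le_secant_of_mem_Icc (hf : ConvexOn ℝ s f) (hp : p ∈ s) (hq : q ∈ s)
    (ht : t ∈ Icc p q) : f t ≤ f p + slope f p q * (t - p) := by
  obtain rfl | hpt := ht.1.eq_or_lt
  · simp
  have hslope : slope f p t ≤ slope f p q :=
    hf.slope_mono hp ⟨hf.1.ordConnected.out hp hq ht, hpt.ne'⟩ ⟨hq, (hpt.trans_le ht.2).ne'⟩ ht.2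
  rw [← add_slope_mul_sub f p t]
  gcongr

theorem secant_le_of_notMem_Ioo (hf : ConvexOn ℝ s f) (hp : p ∈ s) (hq : q ∈ s) (ht : t ∈ s)
    (hpq : p < q) (htpq : t ∉ Ioo p q) : f p + slope f p q * (t - p) ≤ f t := by
  rw [← add_slope_mul_sub f p t]
  rcases not_and_or.1 htpq with htp | hqt
  · obtain rfl | htp := (not_lt.1 htp).eq_or_lt
    · simp
    have := hf.slope_mono hp ⟨ht, htp.ne⟩ ⟨hq, hpq.ne'⟩ (htp.trans hpq).le
    nlinarith
  · have hqt := not_lt.1 hqt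
    have := hf.slope_mono hp ⟨hq, hpq.ne'⟩ ⟨ht, (hpq.trans_le hqt).ne'⟩ hqt
    nlinarith

end secant

section integral

variable {f : ℝ → ℝ} {x y : ℝ}

theorem integral_le_trapezoid (hf : ConvexOn ℝ (Icc x y) f) (hfc : ContinuousOn f (Icc x y))
    (hxy : x ≤ y) : ∫ t in x..y, f t ≤ (y - x) * ((f x + f y) / 2) := by
  have hx : x ∈ Icc x y := left_mem_Icc.2 hxy
  have hy : y ∈ Icc x y := right_mem_Icc.2 hxy
  calc ∫ t in x..y, f t ≤ ∫ t in x..y, (f x + slope f x y * (t - x)) :=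
        integral_mono_on hxy (hfc.intervalIntegrable_of_Icc hxy)
          ((by fun_prop : Continuous _).intervalIntegrable _ _)
          fun t ht => hf.le_secant_of_mem_Icc hx hy ht
    _ = (y - x) * ((f x + f y) / 2) := by
        rw [integral_const_add_mul_sub, ← add_slope_mul_sub f x y]
        ring

theorem weighted_integral_nonneg {p q c₁ c₂ c₃ : ℝ} (hf : ConvexOn ℝ (Icc x y) f)
    (hfc : ContinuousOn f (Icc x y)) (hxp : x ≤ p) (hpq : p < q) (hqy : q ≤ y)
    (hc₁ : 0 ≤ c₁) (hc₂ : c₂ ≤ 0) (hc₃ : 0 ≤ c₃)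
    (h₀ : c₁ * (p - x) + c₂ * (q - p) + c₃ * (y - q) = 0)
    (h₁ : c₁ * (p ^ 2 - x ^ 2) + c₂ * (q ^ 2 - p ^ 2) + c₃ * (y ^ 2 - q ^ 2) = 0) :
    0 ≤ c₁ * (∫ t in x..p, f t) + c₂ * (∫ t in p..q, f t) + c₃ * ∫ t in q..y, f t := by
  set ℓ : ℝ → ℝ := fun t => f p + slope f p q * (t - p) with hℓ
  have hp : p ∈ Icc x y := ⟨hxp, hpq.le.trans hqy⟩
  have hq : q ∈ Icc x y := ⟨hxp.trans hpq.le, hqy⟩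
  have hfint : ∀ {u v}, x ≤ u → u ≤ v → v ≤ y → IntervalIntegrable f MeasureTheory.volume u v :=
    fun hxu huv hvy => (hfc.mono (Icc_subset_Icc hxu hvy)).intervalIntegrable_of_Icc huv
  have hℓint : ∀ u v, IntervalIntegrable ℓ MeasureTheory.volume u v :=
    (by fun_prop : Continuous ℓ).intervalIntegrable
  have hleft : ∫ t in x..p, ℓ t ≤ ∫ t in x..p, f t :=
    integral_mono_on hxp (hℓint _ _) (hfint le_rfl hxp hp.2) fun t ht =>
      hf.secant_le_of_notMem_Ioo hp hq ⟨ht.1, ht.2.trans hp.2⟩ hpq fun h => h.1.not_ge ht.2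
  have hmid : ∫ t in p..q, f t ≤ ∫ t in p..q, ℓ t :=
    integral_mono_on hpq.le (hfint hxp hpq.le hqy) (hℓint _ _) fun t ht =>
      hf.le_secant_of_mem_Icc hp hq ht
  have hright : ∫ t in q..y, ℓ t ≤ ∫ t in q..y, f t :=
    integral_mono_on hqy (hℓint _ _) (hfint hq.1 hqy le_rfl) fun t ht =>
      hf.secant_le_of_notMem_Ioo hp hq ⟨hq.1.trans ht.1, ht.2⟩ hpq fun h => h.2.not_ge ht.1
  have hℓ₀ : c₁ * (∫ t in x..p, ℓ t) + c₂ * (∫ t in p..q, ℓ t) + c₃ * ∫ t in q..y, ℓ t = 0 := by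
    simp only [hℓ, integral_const_add_mul_sub]
    linear_combination (f p - slope f p q * p) * h₀ + slope f p q / 2 * h₁
  linarith [mul_le_mul_of_nonneg_left hleft hc₁, mul_le_mul_of_nonpos_left hmid hc₂,
    mul_le_mul_of_nonneg_left hright hc₃]

end integral

end ConvexOn

/-- Theorem 1(i): if a₁ > -1 then (∑ aᵢF(αᵢx+(1-αᵢ)y))/(y-x) ≤ (1/(y-x))∫ₓʸ f ≤ (f(x)+f(y))/2. -/
theorem stmt_10 (x y : ℝ) (hxy : x < y) (α₁ α₂ α₃ α₄ a₁ a₂ a₃ a₄ : ℝ)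
    (hα₁ : α₁ = 1) (h12 : α₂ < α₁) (h23 : α₃ < α₂) (h34 : α₄ < α₃) (hα₄ : α₄ = 0)
    (ha : a₁ + a₂ + a₃ + a₄ = 0)
    (hM1 : a₁ * (α₂ - α₁) + (a₁ + a₂) * (α₃ - α₂) + (a₁ + a₂ + a₃) * (α₄ - α₃) = 1)
    (hE1 : a₁ * (α₂ ^ 2 - α₁ ^ 2) + (a₁ + a₂) * (α₃ ^ 2 - α₂ ^ 2)
        + (a₁ + a₂ + a₃) * (α₄ ^ 2 - α₃ ^ 2) = 1)
    (ha₁ : -1 < a₁)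
    (f F : ℝ → ℝ)
    (hf_cont : ContinuousOn f (Set.Icc x y)) (hf_conv : ConvexOn ℝ (Set.Icc x y) f)
    (hF : ∀ t ∈ Set.Icc x y, HasDerivWithinAt F (f t) (Set.Icc x y) t) :
    (a₁ * F (α₁ * x + (1 - α₁) * y) + a₂ * F (α₂ * x + (1 - α₂) * y)
          + a₃ * F (α₃ * x + (1 - α₃) * y) + a₄ * F (α₄ * x + (1 - α₄) * y)) / (y - x)
        ≤ (1 / (y - x)) * ∫ t in x..y, f t ∧
      (1 / (y - x)) * (∫ t in x..y, f t) ≤ (f x + f y) / 2 := by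
  subst hα₁ hα₄
  have hyx : 0 < y - x := sub_pos.2 hxy
  set p := α₂ * x + (1 - α₂) * y
  set q := α₃ * x + (1 - α₃) * y
  have hxp : x < p := by nlinarith
  have hpq : p < q := by nlinarith
  have hqy : q < y := by nlinarith
  have h₀ : (1 + a₁) * (p - x) + (1 + a₁ + a₂) * (q - p) + (1 + a₁ + a₂ + a₃) * (y - q) = 0 := by
    linear_combination (x - y) * hM1
  have h₁ : (1 + a₁) * (p ^ 2 - x ^ 2) + (1 + a₁ + a₂) * (q ^ 2 - p ^ 2)
      + (1 + a₁ + a₂ + a₃) * (y ^ 2 - q ^ 2) = 0 := by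
    linear_combination -2 * y * (y - x) * hM1 + (y - x) ^ 2 * hE1
  obtain ⟨hc₂, hc₃⟩ := weights_sign_of_moments_eq_zero hxp hpq hqy (by linarith) h₀ h₁
  have hpos := hf_conv.weighted_integral_nonneg hf_cont hxp.le hpq hqy.le (by linarith) hc₂.le
    hc₃.le h₀ h₁
  have ftc : ∀ {u v}, x ≤ u → u ≤ v → v ≤ y → ∫ t in u..v, f t = F v - F u :=
    fun hxu huv hvy => integral_eq_sub_of_hasDerivWithinAt_Icc huv
      (fun t ht => (hF t (Icc_subset_Icc hxu hvy ht)).mono (Icc_subset_Icc hxu hvy))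
      ((hf_cont.mono (Icc_subset_Icc hxu hvy)).intervalIntegrable_of_Icc huv)
  rw [ftc le_rfl hxp.le (hpq.trans hqy).le, ftc hxp.le hpq.le hqy.le,
    ftc (hxp.trans hpq).le hqy.le le_rfl] at hpos
  simp only [one_div_mul_eq_div]
  constructor
  · rw [ftc le_rfl hxy.le le_rfl]
    gcongr
    simp only [one_mul, sub_self, zero_mul, add_zero, zero_add, sub_zero]
    linear_combination hpos + F y * ha
  · rw [div_le_iff₀ hyx]
    linarith [hf_conv.integral_le_trapezoid hf_cont hxy.le]
end

section
/- Let x < y be real numbers, let α₁, α₂, α₃, α₄ satisfy 1 = α₁ > α₂ > α₃ > α₄ = 0, let a₁, a₂, a₃, a₄ be reals with a₁ + a₂ + a₃ + a₄ = 0, and suppose conditions (M1) and (E1) hold. If a₁ < −1 and a₁ + a₂ ≤ 0, then for every continuous convex function f : [x,y] → ℝ and every antiderivative F of f one has (1/(y−x)) ∫ₓʸ f(t) dt ≤ (Σ_{i=1}^{4} aᵢF(αᵢx + (1−αᵢ)y))/(y−x) ≤ (f(x)+f(y))/2. -/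
/-!
Since `a₁ + a₂ + a₃ + a₄ = 0`, the sum `∑ aᵢ F(αᵢ x + (1 - αᵢ) y)` is `∫ w f` over `[x, y]`, where
the step weight `w` equals `-a₁, -(a₁ + a₂), a₄` on the pieces `[x, p], [p, q], [q, y]` with
`p = α₂ x + (1 - α₂) y`, `q = α₃ x + (1 - α₃) y`; (M1) and (E1) say exactly that `∫ w ℓ = ∫ ℓ`
for every affine `ℓ`.
The upper bound holds because `w ≥ 0` and `f` lies below its chord over `[x, y]`.
For the lower bound, once `-a₁ ≥ 1` the moment conditions force `w - 1` to be `≥ 0, ≤ 0, ≥ 0` on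
the three pieces, and `f - ℓ` has the same sign pattern when `ℓ` is the secant of `f` through `p`
and `q`; hence `∫ (w - 1) f = ∫ (w - 1) (f - ℓ) ≥ 0`.
-/

open Set MeasureTheory intervalIntegral

noncomputable def secant (f : ℝ → ℝ) (u v t : ℝ) : ℝ := f u + (f v - f u) / (v - u) * (t - u)

lemma secant_eq_affine (f : ℝ → ℝ) (u v : ℝ) :
    secant f u v = fun t => (f v - f u) / (v - u) * t + (f u - (f v - f u) / (v - u) * u) := by
  funext t; unfold secant; ring

lemma continuous_secant (f : ℝ → ℝ) (u v : ℝ) : Continuous (secant f u v) := by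
  rw [secant_eq_affine]; fun_prop

lemma sub_secant_eq {f : ℝ → ℝ} {u v t : ℝ} (htu : t ≠ u) :
    f t - secant f u v t = (t - u) * ((f t - f u) / (t - u) - (f v - f u) / (v - u)) := by
  unfold secant
  field_simp [sub_ne_zero.2 htu]
  ring

section Secant

variable {s : Set ℝ} {f : ℝ → ℝ} {u v t : ℝ}

lemma ConvexOn.le_secant (hf : ConvexOn ℝ s f) (hu : u ∈ s) (hv : v ∈ s) (ht : t ∈ Icc u v) :
    f t ≤ secant f u v t := by
  rcases eq_or_lt_of_le ht.1 with rfl | hut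
  · simp [secant]
  have hts : t ∈ s := hf.1.ordConnected.out hu hv ht
  have hslope := hf.secant_mono hu hts hv hut.ne' (hut.trans_le ht.2).ne' ht.2
  rw [← sub_nonpos, sub_secant_eq hut.ne']
  exact mul_nonpos_of_nonneg_of_nonpos (sub_nonneg.2 ht.1) (sub_nonpos.2 hslope)

lemma ConvexOn.secant_le (hf : ConvexOn ℝ s f) (hu : u ∈ s) (hv : v ∈ s) (ht : t ∈ s)
    (huv : u < v) (ht' : t ≤ u ∨ v ≤ t) : secant f u v t ≤ f t := by
  rcases eq_or_ne t u with rfl | htu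
  · simp [secant]
  rw [← sub_nonneg, sub_secant_eq htu]
  rcases ht' with htu' | hvt
  · exact mul_nonneg_of_nonpos_of_nonpos (sub_nonpos.2 htu')
      (sub_nonpos.2 (hf.secant_mono hu ht hv htu huv.ne' (htu'.trans huv.le)))
  · exact mul_nonneg (by linarith) (sub_nonneg.2 (hf.secant_mono hu hv ht huv.ne' htu hvt))

end Secant

lemma integral_affine (m b u v : ℝ) :
    ∫ t in u..v, (m * t + b) = m * (v ^ 2 - u ^ 2) / 2 + b * (v - u) := by
  rw [integral_add ((continuous_const_mul m).intervalIntegrable u v) intervalIntegrable_const,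
    intervalIntegral.integral_const_mul, integral_id, intervalIntegral.integral_const, smul_eq_mul]
  ring

lemma integral_secant (f : ℝ → ℝ) {u v : ℝ} (huv : u ≠ v) :
    ∫ t in u..v, secant f u v t = (f u + f v) / 2 * (v - u) := by
  rw [secant_eq_affine, integral_affine]
  field_simp [sub_ne_zero.2 huv.symm]
  ring

lemma integral_eq_sub_of_hasDerivWithinAt_Icc_s13 {f F : ℝ → ℝ} {x y u v : ℝ}
    (hF : ∀ t ∈ Icc x y, HasDerivWithinAt F (f t) (Icc x y) t) (hfc : ContinuousOn f (Icc x y))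
    (hu : x ≤ u) (huv : u ≤ v) (hv : v ≤ y) : ∫ t in u..v, f t = F v - F u :=
  integral_eq_sub_of_hasDerivAt_of_le huv
    (fun t ht => (hF t ⟨hu.trans ht.1, ht.2.trans hv⟩).continuousWithinAt.mono
      (Icc_subset_Icc hu hv))
    (fun t ht => (hF t ⟨hu.trans ht.1.le, ht.2.le.trans hv⟩).hasDerivAt
      (Icc_mem_nhds (hu.trans_lt ht.1) (ht.2.trans_le hv)))
    ((hfc.mono (Icc_subset_Icc hu hv)).intervalIntegrable_of_Icc huv)

noncomputable def stepIntegral (c₁ c₂ c₃ x p q y : ℝ) (g : ℝ → ℝ) : ℝ :=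
  c₁ * (∫ t in x..p, g t) + c₂ * (∫ t in p..q, g t) + c₃ * ∫ t in q..y, g t

def MomentConditions (c₁ c₂ c₃ x p q y : ℝ) : Prop :=
  c₁ * (p - x) + c₂ * (q - p) + c₃ * (y - q) = y - x ∧
    c₁ * (p ^ 2 - x ^ 2) + c₂ * (q ^ 2 - p ^ 2) + c₃ * (y ^ 2 - q ^ 2) = y ^ 2 - x ^ 2

section StepWeights

variable {c₁ c₂ c₃ x p q y : ℝ}

lemma MomentConditions.stepIntegral_affine (hm : MomentConditions c₁ c₂ c₃ x p q y) (m b : ℝ) :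
    stepIntegral c₁ c₂ c₃ x p q y (fun t => m * t + b) = ∫ t in x..y, (m * t + b) := by
  simp only [stepIntegral, integral_affine]
  linear_combination (m / 2) * hm.2 + b * hm.1

lemma MomentConditions.mid_weight_le_one (hm : MomentConditions c₁ c₂ c₃ x p q y)
    (hxp : x ≤ p) (hpq : p < q) (hqy : q < y) (hc₁ : 1 ≤ c₁) : c₂ ≤ 1 := by
  have h : (c₂ - 1) * ((q - p) * (y - p)) = -((c₁ - 1) * ((p - x) * (q - p + (y - x)))) := by
    linear_combination (q + y) * hm.1 - hm.2
  have hR : 0 ≤ (c₁ - 1) * ((p - x) * (q - p + (y - x))) :=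
    mul_nonneg (sub_nonneg.2 hc₁) (mul_nonneg (sub_nonneg.2 hxp) (by linarith))
  have hpos : 0 < (q - p) * (y - p) := mul_pos (by linarith) (by linarith)
  exact sub_nonpos.1 (nonpos_of_mul_nonpos_left (by linarith) hpos)

lemma MomentConditions.one_le_right_weight (hm : MomentConditions c₁ c₂ c₃ x p q y)
    (hxp : x ≤ p) (hpq : p < q) (hqy : q < y) (hc₁ : 1 ≤ c₁) : 1 ≤ c₃ := by
  have hc₂ := hm.mid_weight_le_one hxp hpq hqy hc₁
  have h : (c₃ - 1) * ((y - q) * (y - p + (q - x))) = -((c₂ - 1) * ((q - p) * (q - x))) := by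
    linear_combination -(x + p) * hm.1 + hm.2
  have hR : 0 ≤ -((c₂ - 1) * ((q - p) * (q - x))) :=
    neg_nonneg.2 (mul_nonpos_of_nonpos_of_nonneg (sub_nonpos.2 hc₂)
      (mul_nonneg (by linarith) (by linarith)))
  have hpos : 0 < (y - q) * (y - p + (q - x)) := mul_pos (by linarith) (by linarith)
  exact sub_nonneg.1 (nonneg_of_mul_nonneg_left (h ▸ hR) hpos)

variable {f : ℝ → ℝ}

theorem ConvexOn.integral_le_stepIntegral (hf : ConvexOn ℝ (Icc x y) f)
    (hfc : ContinuousOn f (Icc x y)) (hm : MomentConditions c₁ c₂ c₃ x p q y)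
    (hxp : x ≤ p) (hpq : p < q) (hqy : q < y) (hc₁ : 1 ≤ c₁) :
    ∫ t in x..y, f t ≤ stepIntegral c₁ c₂ c₃ x p q y f := by
  have hc₂ := hm.mid_weight_le_one hxp hpq hqy hc₁
  have hc₃ := hm.one_le_right_weight hxp hpq hqy hc₁
  have hp : p ∈ Icc x y := ⟨hxp, by linarith⟩
  have hq : q ∈ Icc x y := ⟨by linarith, hqy.le⟩
  have hfi : ∀ {u v}, x ≤ u → u ≤ v → v ≤ y → IntervalIntegrable f volume u v := fun hu huv hv =>
    (hfc.mono (Icc_subset_Icc hu hv)).intervalIntegrable_of_Icc huv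
  have hℓi : ∀ u v, IntervalIntegrable (secant f p q) volume u v := fun u v =>
    (continuous_secant f p q).intervalIntegrable u v
  have h₁ : ∫ t in x..p, secant f p q t ≤ ∫ t in x..p, f t :=
    integral_mono_on hxp (hℓi x p) (hfi le_rfl hxp (by linarith)) fun t ht =>
      hf.secant_le hp hq ⟨ht.1, by linarith [ht.2]⟩ hpq (Or.inl ht.2)
  have h₂ : ∫ t in p..q, f t ≤ ∫ t in p..q, secant f p q t :=
    integral_mono_on hpq.le (hfi hxp hpq.le hqy.le) (hℓi p q) fun t ht => hf.le_secant hp hq ht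
  have h₃ : ∫ t in q..y, secant f p q t ≤ ∫ t in q..y, f t :=
    integral_mono_on hqy.le (hℓi q y) (hfi (by linarith) hqy.le le_rfl) fun t ht =>
      hf.secant_le hp hq ⟨by linarith [ht.1], ht.2⟩ hpq (Or.inr ht.1)
  have hℓ : stepIntegral c₁ c₂ c₃ x p q y (secant f p q) = ∫ t in x..y, secant f p q t := by
    rw [secant_eq_affine]; exact hm.stepIntegral_affine _ _
  rw [← integral_add_adjacent_intervals (hℓi x q) (hℓi q y),
    ← integral_add_adjacent_intervals (hℓi x p) (hℓi p q)] at hℓ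
  rw [← integral_add_adjacent_intervals (hfi le_rfl (by linarith) hqy.le)
      (hfi (by linarith) hqy.le le_rfl),
    ← integral_add_adjacent_intervals (hfi le_rfl hxp (by linarith)) (hfi hxp hpq.le hqy.le)]
  unfold stepIntegral at hℓ ⊢
  linarith [mul_le_mul_of_nonneg_left h₁ (sub_nonneg.2 hc₁),
    mul_le_mul_of_nonpos_left h₂ (sub_nonpos.2 hc₂),
    mul_le_mul_of_nonneg_left h₃ (sub_nonneg.2 hc₃)]

theorem ConvexOn.stepIntegral_le_trapezoid (hf : ConvexOn ℝ (Icc x y) f)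
    (hfc : ContinuousOn f (Icc x y)) (hm : MomentConditions c₁ c₂ c₃ x p q y)
    (hxp : x ≤ p) (hpq : p ≤ q) (hqy : q ≤ y) (hxy : x < y)
    (hc₁ : 0 ≤ c₁) (hc₂ : 0 ≤ c₂) (hc₃ : 0 ≤ c₃) :
    stepIntegral c₁ c₂ c₃ x p q y f ≤ (f x + f y) / 2 * (y - x) := by
  have hx : x ∈ Icc x y := left_mem_Icc.2 hxy.le
  have hy : y ∈ Icc x y := right_mem_Icc.2 hxy.le
  have hle : ∀ {u v}, x ≤ u → u ≤ v → v ≤ y →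
      ∫ t in u..v, f t ≤ ∫ t in u..v, secant f x y t := fun {u v} hu huv hv =>
    integral_mono_on huv ((hfc.mono (Icc_subset_Icc hu hv)).intervalIntegrable_of_Icc huv)
      ((continuous_secant f x y).intervalIntegrable u v) fun t ht =>
        hf.le_secant hx hy ⟨hu.trans ht.1, ht.2.trans hv⟩
  have hℓ : stepIntegral c₁ c₂ c₃ x p q y (secant f x y) = (f x + f y) / 2 * (y - x) := by
    rw [← integral_secant f hxy.ne, secant_eq_affine]; exact hm.stepIntegral_affine _ _
  unfold stepIntegral at hℓ ⊢
  linarith [mul_le_mul_of_nonneg_left (hle le_rfl hxp (hpq.trans hqy)) hc₁,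
    mul_le_mul_of_nonneg_left (hle hxp hpq hqy) hc₂,
    mul_le_mul_of_nonneg_left (hle (hxp.trans hpq) hqy le_rfl) hc₃]

end StepWeights

/-- Theorem 1(iv): if a₁ < -1 and a₁ + a₂ ≤ 0 then (1/(y-x))∫ₓʸ f ≤ (∑ aᵢF(αᵢx+(1-αᵢ)y))/(y-x) ≤ (f(x)+f(y))/2. -/
theorem stmt_13 (x y : ℝ) (hxy : x < y) (α₁ α₂ α₃ α₄ a₁ a₂ a₃ a₄ : ℝ)
    (hα₁ : α₁ = 1) (h12 : α₂ < α₁) (h23 : α₃ < α₂) (h34 : α₄ < α₃) (hα₄ : α₄ = 0)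
    (ha : a₁ + a₂ + a₃ + a₄ = 0)
    (hM1 : a₁ * (α₂ - α₁) + (a₁ + a₂) * (α₃ - α₂) + (a₁ + a₂ + a₃) * (α₄ - α₃) = 1)
    (hE1 : a₁ * (α₂ ^ 2 - α₁ ^ 2) + (a₁ + a₂) * (α₃ ^ 2 - α₂ ^ 2)
        + (a₁ + a₂ + a₃) * (α₄ ^ 2 - α₃ ^ 2) = 1)
    (ha₁ : a₁ < -1) (ha₁₂ : a₁ + a₂ ≤ 0)
    (f F : ℝ → ℝ)
    (hf_cont : ContinuousOn f (Set.Icc x y)) (hf_conv : ConvexOn ℝ (Set.Icc x y) f)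
    (hF : ∀ t ∈ Set.Icc x y, HasDerivWithinAt F (f t) (Set.Icc x y) t) :
    (1 / (y - x)) * (∫ t in x..y, f t)
        ≤ (a₁ * F (α₁ * x + (1 - α₁) * y) + a₂ * F (α₂ * x + (1 - α₂) * y)
          + a₃ * F (α₃ * x + (1 - α₃) * y) + a₄ * F (α₄ * x + (1 - α₄) * y)) / (y - x) ∧
      (a₁ * F (α₁ * x + (1 - α₁) * y) + a₂ * F (α₂ * x + (1 - α₂) * y)
          + a₃ * F (α₃ * x + (1 - α₃) * y) + a₄ * F (α₄ * x + (1 - α₄) * y)) / (y - x)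
        ≤ (f x + f y) / 2 := by
  subst hα₁ hα₄
  set p := α₂ * x + (1 - α₂) * y
  set q := α₃ * x + (1 - α₃) * y
  have hxp : x < p := by nlinarith
  have hpq : p < q := by nlinarith
  have hqy : q < y := by nlinarith
  have hm : MomentConditions (-a₁) (-(a₁ + a₂)) a₄ x p q y :=
    ⟨by linear_combination (y - x) * hM1 + α₃ * (y - x) * ha,
      by linear_combination 2 * y * (y - x) * hM1 - (y - x) ^ 2 * hE1 + (y ^ 2 - q ^ 2) * ha⟩
  have hsum : a₁ * F (1 * x + (1 - 1) * y) + a₂ * F p + a₃ * F q + a₄ * F (0 * x + (1 - 0) * y)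
      = stepIntegral (-a₁) (-(a₁ + a₂)) a₄ x p q y f := by
    rw [stepIntegral,
      integral_eq_sub_of_hasDerivWithinAt_Icc_s13 hF hf_cont le_rfl hxp.le (by linarith),
      integral_eq_sub_of_hasDerivWithinAt_Icc_s13 hF hf_cont hxp.le hpq.le hqy.le,
      integral_eq_sub_of_hasDerivWithinAt_Icc_s13 hF hf_cont (by linarith) hqy.le le_rfl,
      show 1 * x + (1 - 1) * y = x by ring, show 0 * x + (1 - 0) * y = y by ring]
    linear_combination F q * ha
  have hc₁ : 1 ≤ -a₁ := by linarith
  have hc₃ : 1 ≤ a₄ := hm.one_le_right_weight hxp.le hpq hqy hc₁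
  have hyx : 0 < y - x := sub_pos.2 hxy
  rw [hsum, one_div_mul_eq_div, div_le_div_iff_of_pos_right hyx, div_le_iff₀ hyx]
  constructor
  · exact hf_conv.integral_le_stepIntegral hf_cont hm hxp.le hpq hqy hc₁
  · exact hf_conv.stepIntegral_le_trapezoid hf_cont hm hxp.le hpq.le hqy.le hxy
      (by linarith) (by linarith) (by linarith)
end

section
/- Let x < y be real numbers, let f : [x,y] → ℝ be continuous and convex, and let F : [x,y] → ℝ be an antiderivative of f. Then (1/(y−x)) ∫ₓʸ f(t) dt ≤ (−2F(x) + 3F((2x+y)/3) − 3F((x+2y)/3) + 2F(y))/(y−x). -/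
/-- Example 2: `(1/(y-x)) ∫ₓʸ f ≤ (-2F(x) + 3F((2x+y)/3) - 3F((x+2y)/3) + 2F(y))/(y-x)`
for every continuous convex `f` and its antiderivative `F`. -/
theorem stmt_15 (x y : ℝ) (hxy : x < y) (f F : ℝ → ℝ)
    (hf_cont : ContinuousOn f (Set.Icc x y)) (hf_conv : ConvexOn ℝ (Set.Icc x y) f)
    (hF : ∀ t ∈ Set.Icc x y, HasDerivWithinAt F (f t) (Set.Icc x y) t) :
    (1 / (y - x)) * (∫ t in x..y, f t)
      ≤ (-2 * F x + 3 * F ((2 * x + y) / 3) - 3 * F ((x + 2 * y) / 3) + 2 * F y) / (y - x) := by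
  set h : ℝ := (y - x) / 3 with hh
  have hhpos : 0 < h := by rw [hh]; linarith
  set a : ℝ := x + h with ha
  set b : ℝ := x + 2 * h with hb
  have hxa : x < a := by simp [ha]; linarith
  have hab : a < b := by simp [ha, hb]; linarith
  have hby : b < y := by simp [hb, hh]; linarith
  have haeq : (2 * x + y) / 3 = a := by simp [ha, hh]; ring
  have hbeq : (x + 2 * y) / 3 = b := by simp [hb, hh]; ring
  -- F continuous on Icc x y
  have hFcont : ContinuousOn F (Set.Icc x y) := fun t ht => (hF t ht).continuousWithinAt
  -- generic FTC on subintervals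
  have ftc : ∀ u v : ℝ, x ≤ u → u ≤ v → v ≤ y → ∫ t in u..v, f t = F v - F u := by
    intro u v hxu huv hvy
    apply intervalIntegral.integral_eq_sub_of_hasDeriv_right_of_le huv
    · exact hFcont.mono (Set.Icc_subset_Icc hxu hvy)
    · intro t ht
      have ht' : t ∈ Set.Ioo x y := ⟨lt_of_le_of_lt hxu ht.1, lt_of_lt_of_le ht.2 hvy⟩
      have : HasDerivAt F (f t) t :=
        (hF t (Set.Ioo_subset_Icc_self ht')).hasDerivAt
          (Icc_mem_nhds ht'.1 ht'.2)
      exact this.hasDerivWithinAt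
    · have : ContinuousOn f (Set.uIcc u v) := by
        rw [Set.uIcc_of_le huv]; exact hf_cont.mono (Set.Icc_subset_Icc hxu hvy)
      exact this.intervalIntegrable
  have sub1 : Set.Icc x a ⊆ Set.Icc x y := Set.Icc_subset_Icc le_rfl (by linarith)
  have memh : ∀ t ∈ Set.Icc x a, t + h ∈ Set.Icc x y := by
    intro t ht
    constructor <;> [linarith [ht.1]; (have := ht.2; simp [ha] at this; simp [hh]; linarith)]
  have mem2h : ∀ t ∈ Set.Icc x a, t + 2 * h ∈ Set.Icc x y := by
    intro t ht
    constructor <;> [linarith [ht.1]; (have := ht.2; simp [ha] at this; simp [hh]; linarith)]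
  -- integrability
  have int1 : IntervalIntegrable (fun t => 2 * f (t + h)) MeasureTheory.volume x a := by
    apply ContinuousOn.intervalIntegrable
    rw [Set.uIcc_of_le hxa.le]
    exact (continuousOn_const.mul
      ((hf_cont.comp ((continuous_add_right h).continuousOn) memh)))
  have int2 : IntervalIntegrable (fun t => f t + f (t + 2 * h)) MeasureTheory.volume x a := by
    apply ContinuousOn.intervalIntegrable
    rw [Set.uIcc_of_le hxa.le]
    exact (hf_cont.mono sub1).add
      ((hf_cont.comp ((continuous_add_right (2 * h)).continuousOn) mem2h))
  -- pointwise convexity inequality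
  have key : ∀ t ∈ Set.Icc x a, 2 * f (t + h) ≤ f t + f (t + 2 * h) := by
    intro t ht
    have h1 := hf_conv.2 (sub1 ht) (mem2h t ht) (by norm_num : (0:ℝ) ≤ 1/2)
      (by norm_num : (0:ℝ) ≤ 1/2) (by norm_num)
    have heq : (1/2 : ℝ) • t + (1/2 : ℝ) • (t + 2 * h) = t + h := by
      simp [smul_eq_mul]; ring
    rw [heq] at h1
    simp [smul_eq_mul] at h1
    linarith
  have mono := intervalIntegral.integral_mono_on hxa.le int1 int2 key
  -- rewrite the two shifted integrals
  have e1 : ∫ t in x..a, f (t + h) = ∫ t in a..b, f t := by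
    rw [intervalIntegral.integral_comp_add_right]
    have h1 : x + h = a := ha.symm
    have h2 : a + h = b := by rw [ha, hb]; ring
    rw [h1, h2]
  have e2 : ∫ t in x..a, f (t + 2 * h) = ∫ t in b..y, f t := by
    rw [intervalIntegral.integral_comp_add_right]
    have h1 : x + 2 * h = b := hb.symm
    have h2 : a + 2 * h = y := by rw [ha, hh]; ring
    rw [h1, h2]
  have int_mid : IntervalIntegrable (fun t => f (t + h)) MeasureTheory.volume x a := by
    apply ContinuousOn.intervalIntegrable
    rw [Set.uIcc_of_le hxa.le]
    exact hf_cont.comp ((continuous_add_right h).continuousOn) memh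
  have int_right : IntervalIntegrable (fun t => f (t + 2 * h)) MeasureTheory.volume x a := by
    apply ContinuousOn.intervalIntegrable
    rw [Set.uIcc_of_le hxa.le]
    exact hf_cont.comp ((continuous_add_right (2 * h)).continuousOn) mem2h
  have int_left : IntervalIntegrable f MeasureTheory.volume x a := by
    apply ContinuousOn.intervalIntegrable
    rw [Set.uIcc_of_le hxa.le]
    exact hf_cont.mono sub1
  rw [intervalIntegral.integral_const_mul, intervalIntegral.integral_add int_left int_right] at mono
  rw [e1, e2] at mono
  -- FTC values
  have I1 : ∫ t in x..a, f t = F a - F x := ftc x a le_rfl hxa.le (by linarith)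
  have I2 : ∫ t in a..b, f t = F b - F a := ftc a b hxa.le hab.le hby.le
  have I3 : ∫ t in b..y, f t = F y - F b := ftc b y (by linarith) hby.le le_rfl
  have Itot : ∫ t in x..y, f t = F y - F x := ftc x y le_rfl (by linarith) le_rfl
  rw [I1, I2, I3] at mono
  rw [Itot, haeq, hbeq, one_div, ← div_eq_inv_mul, div_le_div_iff_of_pos_right (by linarith : (0:ℝ) < y - x)]
  linarith
end

section
/- Let x < y be real numbers, let f : [x,y] → ℝ be continuous and convex, and let F : [x,y] → ℝ be an antiderivative of f. Then f((x+y)/2) ≤ (−(1/2)F(x) − (3/2)F((2x+y)/3) + (3/2)F((x+2y)/3) + (1/2)F(y))/(y−x) ≤ (1/(y−x)) ∫ₓʸ f(t) dt. -/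
/-- Convexity pairing: if `c + d = u + v` with `u ≤ c ≤ v`, then
`f c + f d ≤ f u + f v` for `f` convex on `s` containing `u, v`. -/
lemma stmt16_pair {s : Set ℝ} {f : ℝ → ℝ} (hf : ConvexOn ℝ s f) {u v c d : ℝ}
    (hu : u ∈ s) (hv : v ∈ s) (huc : u ≤ c) (hcv : c ≤ v)
    (hsum : c + d = u + v) : f c + f d ≤ f u + f v := by
  rcases eq_or_lt_of_le (huc.trans hcv) with h | h
  · have hc : c = u := le_antisymm (h ▸ hcv) huc
    have hd : d = v := by linarith
    rw [hc, hd]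
  · set l : ℝ := (v - c) / (v - u) with hl
    have hvu : 0 < v - u := by linarith
    have hl0 : 0 ≤ l := div_nonneg (by linarith) hvu.le
    have hl1 : l ≤ 1 := (div_le_one hvu).2 (by linarith)
    have key : l * (v - u) = v - c := div_mul_cancel₀ _ hvu.ne'
    have hc : c = l * u + (1 - l) * v := by nlinarith [key]
    have hd : d = (1 - l) * u + l * v := by nlinarith [key]
    have h1 := hf.2 hu hv hl0 (by linarith : (0:ℝ) ≤ 1 - l) (by ring)
    have h2 := hf.2 hu hv (by linarith : (0:ℝ) ≤ 1 - l) hl0 (by ring)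
    simp only [smul_eq_mul] at h1 h2
    rw [← hc] at h1
    rw [← hd] at h2
    linarith

/-- Midpoint Hermite–Hadamard on a centered subinterval. -/
lemma stmt16_mid {x y m h : ℝ} {f : ℝ → ℝ} (hf_cont : ContinuousOn f (Set.Icc x y))
    (hf_conv : ConvexOn ℝ (Set.Icc x y) f) (hh : 0 ≤ h)
    (h1 : x ≤ m - h) (h2 : m + h ≤ y) :
    2 * h * f m ≤ ∫ t in (m - h)..(m + h), f t := by
  have hsub : Set.uIcc (0:ℝ) h ⊆ Set.Icc 0 h := by
    rw [Set.uIcc_of_le hh]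
  have hmaps1 : ∀ s ∈ Set.Icc (0:ℝ) h, m - s ∈ Set.Icc x y := by
    intro s hs; exact ⟨by linarith [hs.2], by linarith [hs.1]⟩
  have hmaps2 : ∀ s ∈ Set.Icc (0:ℝ) h, m + s ∈ Set.Icc x y := by
    intro s hs; exact ⟨by linarith [hs.1], by linarith [hs.2]⟩
  have hc1 : ContinuousOn (fun s => f (m - s)) (Set.Icc 0 h) :=
    hf_cont.comp (by fun_prop) hmaps1
  have hc2 : ContinuousOn (fun s => f (m + s)) (Set.Icc 0 h) :=
    hf_cont.comp (by fun_prop) hmaps2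
  have hi1 : IntervalIntegrable (fun s => f (m - s)) MeasureTheory.volume 0 h :=
    (hc1.mono hsub).intervalIntegrable
  have hi2 : IntervalIntegrable (fun s => f (m + s)) MeasureTheory.volume 0 h :=
    (hc2.mono hsub).intervalIntegrable
  have hpt : ∀ s ∈ Set.Icc (0:ℝ) h, 2 * f m ≤ f (m - s) + f (m + s) := by
    intro s hs
    have := hf_conv.2 (hmaps1 s hs) (hmaps2 s hs)
      (by norm_num : (0:ℝ) ≤ 1/2) (by norm_num : (0:ℝ) ≤ 1/2) (by norm_num)
    simp only [smul_eq_mul] at this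
    have harg : (1/2 : ℝ) * (m - s) + (1/2) * (m + s) = m := by ring
    rw [harg] at this
    linarith
  have hmono : (∫ _ in (0:ℝ)..h, 2 * f m) ≤ ∫ s in (0:ℝ)..h, (f (m - s) + f (m + s)) := by
    apply intervalIntegral.integral_mono_on hh intervalIntegrable_const (hi1.add hi2)
    exact hpt
  rw [intervalIntegral.integral_const, intervalIntegral.integral_add hi1 hi2,
      intervalIntegral.integral_comp_sub_left f m, intervalIntegral.integral_comp_add_left f m]
      at hmono
  simp only [smul_eq_mul, sub_zero, add_zero] at hmono
  have e1 : m - h ≤ m := by linarith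
  have e2 : m ≤ m + h := by linarith
  have hiA : IntervalIntegrable f MeasureTheory.volume (m - h) m :=
    (hf_cont.mono (by rw [Set.uIcc_of_le e1]; exact Set.Icc_subset_Icc h1 (by linarith))).intervalIntegrable
  have hiB : IntervalIntegrable f MeasureTheory.volume m (m + h) :=
    (hf_cont.mono (by rw [Set.uIcc_of_le e2]; exact Set.Icc_subset_Icc (by linarith) h2)).intervalIntegrable
  have hadj := intervalIntegral.integral_add_adjacent_intervals hiA hiB
  linarith [hmono, hadj]

/-- FTC on a subinterval. -/
lemma stmt16_ftc {x y a b : ℝ} {f F : ℝ → ℝ} (hf_cont : ContinuousOn f (Set.Icc x y))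
    (hF : ∀ t ∈ Set.Icc x y, HasDerivWithinAt F (f t) (Set.Icc x y) t)
    (hxa : x ≤ a) (hab : a ≤ b) (hby : b ≤ y) :
    ∫ t in a..b, f t = F b - F a := by
  apply intervalIntegral.integral_eq_sub_of_hasDeriv_right_of_le hab
  · intro t ht
    exact ((hF t ⟨hxa.trans ht.1, ht.2.trans hby⟩).continuousWithinAt).mono
      (Set.Icc_subset_Icc hxa hby)
  · intro t ht
    have hx' : x < t := hxa.trans_lt ht.1
    have hy' : t < y := ht.2.trans_le hby
    have : HasDerivAt F (f t) t :=
      (hF t ⟨hx'.le, hy'.le⟩).hasDerivAt (Icc_mem_nhds hx' hy')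
    exact this.hasDerivWithinAt
  · exact (hf_cont.mono (Set.uIcc_subset_Icc ⟨hxa, hab.trans hby⟩
      ⟨hxa.trans hab, hby⟩)).intervalIntegrable

/-- Example 3: `f((x+y)/2) ≤ (-(1/2)F(x) - (3/2)F((2x+y)/3) + (3/2)F((x+2y)/3)
+ (1/2)F(y))/(y-x) ≤ (1/(y-x)) ∫ₓʸ f` for every continuous convex `f` and its
antiderivative `F`. -/
theorem stmt_16 (x y : ℝ) (hxy : x < y) (f F : ℝ → ℝ)
    (hf_cont : ContinuousOn f (Set.Icc x y)) (hf_conv : ConvexOn ℝ (Set.Icc x y) f)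
    (hF : ∀ t ∈ Set.Icc x y, HasDerivWithinAt F (f t) (Set.Icc x y) t) :
    f ((x + y) / 2)
        ≤ (-(1 / 2) * F x - (3 / 2) * F ((2 * x + y) / 3) + (3 / 2) * F ((x + 2 * y) / 3)
            + (1 / 2) * F y) / (y - x) ∧
      (-(1 / 2) * F x - (3 / 2) * F ((2 * x + y) / 3) + (3 / 2) * F ((x + 2 * y) / 3)
            + (1 / 2) * F y) / (y - x)
        ≤ (1 / (y - x)) * ∫ t in x..y, f t := by
  set a := (2 * x + y) / 3 with ha
  set b := (x + 2 * y) / 3 with hb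
  set m := (x + y) / 2 with hm
  have hxa : x ≤ a := by rw [ha]; linarith
  have hab : a ≤ b := by rw [ha, hb]; linarith
  have hby : b ≤ y := by rw [hb]; linarith
  have hpos : (0:ℝ) < y - x := by linarith
  -- FTC identities
  have Ixy : ∫ t in x..y, f t = F y - F x := stmt16_ftc hf_cont hF le_rfl (by linarith) le_rfl
  have Iab : ∫ t in a..b, f t = F b - F a := stmt16_ftc hf_cont hF hxa hab hby
  -- left inequality ingredients
  have A1 : 2 * ((y - x) / 2) * f m ≤ ∫ t in (m - (y - x) / 2)..(m + (y - x) / 2), f t :=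
    stmt16_mid hf_cont hf_conv (by linarith) (by rw [hm]; linarith) (by rw [hm]; linarith)
  rw [show m - (y - x) / 2 = x by rw [hm]; ring, show m + (y - x) / 2 = y by rw [hm]; ring] at A1
  have A2 : 2 * ((y - x) / 6) * f m ≤ ∫ t in (m - (y - x) / 6)..(m + (y - x) / 6), f t :=
    stmt16_mid hf_cont hf_conv (by linarith) (by rw [hm]; linarith) (by rw [hm]; linarith)
  rw [show m - (y - x) / 6 = a by rw [hm, ha]; ring,
      show m + (y - x) / 6 = b by rw [hm, hb]; ring] at A2
  -- right inequality key: 2 ∫ₐᵇ ≤ ∫ₓᵃ + ∫ᵦʸ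
  set L := (y - x) / 3 with hL
  have hL0 : 0 ≤ L := by rw [hL]; linarith
  have hsubL : Set.uIcc (0:ℝ) L ⊆ Set.Icc 0 L := by rw [Set.uIcc_of_le hL0]
  have hmapsxa : ∀ s ∈ Set.Icc (0:ℝ) L, x + s ∈ Set.Icc x y := by
    intro s hs; constructor <;> [linarith [hs.1]; (rw [hL] at hs; linarith [hs.2])]
  have hmapsys : ∀ s ∈ Set.Icc (0:ℝ) L, y - s ∈ Set.Icc x y := by
    intro s hs; rw [hL] at hs; constructor <;> [linarith [hs.2]; linarith [hs.1]]
  have hmapsas : ∀ s ∈ Set.Icc (0:ℝ) L, a + s ∈ Set.Icc x y := by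
    intro s hs; rw [hL] at hs; rw [ha]; constructor <;> [linarith [hs.1]; linarith [hs.2]]
  have hmapsbs : ∀ s ∈ Set.Icc (0:ℝ) L, b - s ∈ Set.Icc x y := by
    intro s hs; rw [hL] at hs; rw [hb]; constructor <;> [linarith [hs.2]; linarith [hs.1]]
  have hia : IntervalIntegrable (fun s => f (a + s)) MeasureTheory.volume 0 L :=
    ((hf_cont.comp (by fun_prop) hmapsas).mono hsubL).intervalIntegrable
  have hib : IntervalIntegrable (fun s => f (b - s)) MeasureTheory.volume 0 L :=
    ((hf_cont.comp (by fun_prop) hmapsbs).mono hsubL).intervalIntegrable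
  have hix : IntervalIntegrable (fun s => f (x + s)) MeasureTheory.volume 0 L :=
    ((hf_cont.comp (by fun_prop) hmapsxa).mono hsubL).intervalIntegrable
  have hiy : IntervalIntegrable (fun s => f (y - s)) MeasureTheory.volume 0 L :=
    ((hf_cont.comp (by fun_prop) hmapsys).mono hsubL).intervalIntegrable
  have hmono : (∫ s in (0:ℝ)..L, (f (a + s) + f (b - s)))
      ≤ ∫ s in (0:ℝ)..L, (f (x + s) + f (y - s)) := by
    apply intervalIntegral.integral_mono_on hL0 (hia.add hib) (hix.add hiy)
    intro s hs
    have hs2 : s ≤ L := hs.2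
    rw [hL] at hs2
    have := stmt16_pair (d := b - s) hf_conv (hmapsxa s hs) (hmapsys s hs)
      (by linarith [hxa] : x + s ≤ a + s)
      (by rw [ha]; linarith : a + s ≤ y - s)
      (by rw [ha, hb]; ring)
    linarith [this]
  rw [intervalIntegral.integral_add hia hib, intervalIntegral.integral_add hix hiy,
      intervalIntegral.integral_comp_add_left f a, intervalIntegral.integral_comp_sub_left f b,
      intervalIntegral.integral_comp_add_left f x, intervalIntegral.integral_comp_sub_left f y]
      at hmono
  rw [show a + L = b by rw [ha, hb, hL]; ring, show b - L = a by rw [ha, hb, hL]; ring,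
      show x + L = a by rw [ha, hL]; ring, show y - L = b by rw [hb, hL]; ring,
      add_zero, sub_zero] at hmono
  simp only [add_zero, sub_zero] at hmono
  -- adjacent intervals
  have hiXA : IntervalIntegrable f MeasureTheory.volume x a :=
    (hf_cont.mono (by rw [Set.uIcc_of_le hxa]; exact Set.Icc_subset_Icc le_rfl (hab.trans hby))).intervalIntegrable
  have hiAB : IntervalIntegrable f MeasureTheory.volume a b :=
    (hf_cont.mono (by rw [Set.uIcc_of_le hab]; exact Set.Icc_subset_Icc hxa hby)).intervalIntegrable
  have hiBY : IntervalIntegrable f MeasureTheory.volume b y :=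
    (hf_cont.mono (by rw [Set.uIcc_of_le hby]; exact Set.Icc_subset_Icc (hxa.trans hab) le_rfl)).intervalIntegrable
  have hadj1 := intervalIntegral.integral_add_adjacent_intervals hiXA hiAB
  have hadj2 := intervalIntegral.integral_add_adjacent_intervals
    (hiXA.trans hiAB) hiBY
  constructor
  · rw [le_div_iff₀ hpos]
    nlinarith [A1, A2, Ixy, Iab]
  · rw [div_le_iff₀ hpos]
    have hE : (1 / (y - x)) * (∫ t in x..y, f t) * (y - x) = ∫ t in x..y, f t := by
      field_simp
    rw [hE]
    nlinarith [hmono, hadj1, hadj2, Ixy, Iab]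
end

section
/- For all real numbers x < y, there exist a continuous convex function f : [x,y] → ℝ with antiderivative F such that f((x+y)/2) > ((1/3)F(x) − (8/3)F((3x+y)/4) + (8/3)F((x+3y)/4) − (1/3)F(y))/(y−x), and there also exist a continuous convex function g : [x,y] → ℝ with antiderivative G such that g((x+y)/2) < ((1/3)G(x) − (8/3)G((3x+y)/4) + (8/3)G((x+3y)/4) − (1/3)G(y))/(y−x). In other words, neither of the two inequalities between f((x+y)/2) and this four-point expression is satisfied by all continuous convex functions. -/
/-!
The four-point rule is exact whenever `f` is a cubic, and on `f t = (t - m) ^ 4`, `m` the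
midpoint, it falls short of `f m` by `(y - x) ^ 4 / 320`. So `(t - m) ^ 4` gives the first
inequality, and `6 a ^ 2 (t - m) ^ 2 - (t - m) ^ 4` with `a = (y - x) / 2` gives the second:
its quartic coefficient has the opposite sign, yet its second derivative
`12 (a ^ 2 - (t - m) ^ 2)` is still nonnegative on `[x, y]`.
-/

open Set

noncomputable section

def fourPointDeriv (F : ℝ → ℝ) (x y : ℝ) : ℝ :=
  ((1 / 3) * F x - (8 / 3) * F ((3 * x + y) / 4) + (8 / 3) * F ((x + 3 * y) / 4)
    - (1 / 3) * F y) / (y - x)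

def evenQuartic (m b c t : ℝ) : ℝ := b * (t - m) ^ 2 + c * (t - m) ^ 4

def evenQuarticPrimitive (m b c t : ℝ) : ℝ := b * (t - m) ^ 3 / 3 + c * (t - m) ^ 5 / 5

end

section EvenQuartic

variable {m b c : ℝ}

theorem hasDerivAt_evenQuartic (t : ℝ) :
    HasDerivAt (evenQuartic m b c) (2 * b * (t - m) + 4 * c * (t - m) ^ 3) t := by
  have hu : HasDerivAt (fun t ↦ t - m) 1 t := (hasDerivAt_id' t).sub_const m
  exact (((hu.pow 2).const_mul b).add ((hu.pow 4).const_mul c)).congr_deriv (by ring)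

theorem hasDerivAt_evenQuartic_deriv (t : ℝ) :
    HasDerivAt (fun t ↦ 2 * b * (t - m) + 4 * c * (t - m) ^ 3)
      (2 * b + 12 * c * (t - m) ^ 2) t := by
  have hu : HasDerivAt (fun t ↦ t - m) 1 t := (hasDerivAt_id' t).sub_const m
  exact ((hu.const_mul (2 * b)).add ((hu.pow 3).const_mul (4 * c))).congr_deriv (by ring)

theorem hasDerivAt_evenQuarticPrimitive (t : ℝ) :
    HasDerivAt (evenQuarticPrimitive m b c) (evenQuartic m b c t) t := by
  have hu : HasDerivAt (fun t ↦ t - m) 1 t := (hasDerivAt_id' t).sub_const m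
  exact ((((hu.pow 3).const_mul b).div_const 3).add
    (((hu.pow 5).const_mul c).div_const 5)).congr_deriv (by unfold evenQuartic; ring)

theorem continuous_evenQuartic : Continuous (evenQuartic m b c) := by
  unfold evenQuartic
  fun_prop

theorem convexOn_evenQuartic {s : Set ℝ} (hs : Convex ℝ s)
    (h : ∀ t ∈ interior s, 0 ≤ 2 * b + 12 * c * (t - m) ^ 2) :
    ConvexOn ℝ s (evenQuartic m b c) :=
  convexOn_of_hasDerivWithinAt2_nonneg hs continuous_evenQuartic.continuousOn
    (fun t _ ↦ (hasDerivAt_evenQuartic t).hasDerivWithinAt)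
    (fun t _ ↦ (hasDerivAt_evenQuartic_deriv t).hasDerivWithinAt) h

theorem evenQuartic_self : evenQuartic m b c m = 0 := by
  simp [evenQuartic]

theorem evenQuartic_sub_fourPointDeriv {x y : ℝ} (hxy : x ≠ y) :
    evenQuartic ((x + y) / 2) b c ((x + y) / 2)
      - fourPointDeriv (evenQuarticPrimitive ((x + y) / 2) b c) x y = c * (y - x) ^ 4 / 320 := by
  have hyx : y - x ≠ 0 := sub_ne_zero.2 hxy.symm
  simp only [evenQuartic_self, fourPointDeriv, evenQuarticPrimitive]
  field_simp
  ring

end EvenQuartic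

/-- Example 4: neither `f((x+y)/2) ≤ E(F)` nor `f((x+y)/2) ≥ E(F)`, where
`E(F) = ((1/3)F(x) - (8/3)F((3x+y)/4) + (8/3)F((x+3y)/4) - (1/3)F(y))/(y-x)`, is
satisfied by all continuous convex functions `f` with antiderivative `F`. -/
theorem stmt_19 (x y : ℝ) (hxy : x < y) :
    (∃ f F : ℝ → ℝ,
        ContinuousOn f (Set.Icc x y) ∧ ConvexOn ℝ (Set.Icc x y) f ∧
        (∀ t ∈ Set.Icc x y, HasDerivWithinAt F (f t) (Set.Icc x y) t) ∧
        f ((x + y) / 2)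
          > ((1 / 3) * F x - (8 / 3) * F ((3 * x + y) / 4) + (8 / 3) * F ((x + 3 * y) / 4)
              - (1 / 3) * F y) / (y - x)) ∧
      (∃ g G : ℝ → ℝ,
        ContinuousOn g (Set.Icc x y) ∧ ConvexOn ℝ (Set.Icc x y) g ∧
        (∀ t ∈ Set.Icc x y, HasDerivWithinAt G (g t) (Set.Icc x y) t) ∧
        g ((x + y) / 2)
          < ((1 / 3) * G x - (8 / 3) * G ((3 * x + y) / 4) + (8 / 3) * G ((x + 3 * y) / 4)
              - (1 / 3) * G y) / (y - x)) := by
  set m := (x + y) / 2 with hm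
  have herr : 0 < (y - x) ^ 4 / 320 := by have := sub_pos.2 hxy; positivity
  have hderiv (b c : ℝ) : ∀ t ∈ Icc x y,
      HasDerivWithinAt (evenQuarticPrimitive m b c) (evenQuartic m b c t) (Icc x y) t :=
    fun t _ ↦ (hasDerivAt_evenQuarticPrimitive t).hasDerivWithinAt
  constructor
  · refine ⟨evenQuartic m 0 1, evenQuarticPrimitive m 0 1, continuous_evenQuartic.continuousOn,
      convexOn_evenQuartic (convex_Icc x y) (fun t _ ↦ by positivity), hderiv 0 1, ?_⟩
    have := evenQuartic_sub_fourPointDeriv (b := 0) (c := 1) hxy.ne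
    unfold fourPointDeriv at this
    linarith
  · refine ⟨evenQuartic m (6 * ((y - x) / 2) ^ 2) (-1),
      evenQuarticPrimitive m (6 * ((y - x) / 2) ^ 2) (-1), continuous_evenQuartic.continuousOn,
      convexOn_evenQuartic (convex_Icc x y) (fun t ht ↦ ?_), hderiv _ _, ?_⟩
    · rw [interior_Icc] at ht
      rw [hm]
      -- `((y - x) / 2) ^ 2 - (t - m) ^ 2 = (t - x) * (y - t)`
      nlinarith [mul_pos (sub_pos.2 ht.1) (sub_pos.2 ht.2)]
    · have := evenQuartic_sub_fourPointDeriv (b := 6 * ((y - x) / 2) ^ 2) (c := -1) hxy.ne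
      unfold fourPointDeriv at this
      linarith
end
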